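/- arXiv:2506.12426 — 6 statements merged into one kernel-verified Lean document; each statement's English description precedes it below -/
import Mathlib

section
/- Let J : ℝ^N → (0,∞) be a positive measurable kernel satisfying the exponential-decay condition: there exists M_J > 0 such that for all 0 < δ < M_J there is a constant C(δ) with ∫ J(x−y) e^{−δ|y|} dy ≤ C(δ) e^{−δ|x|} for all x. Suppose f ∈ L^1(ℝ^N) satisfies c₁(1+|x|)^{−a} e^{−b|x|} ≤ f(x) ≤ c₂(1+|x|)^{−a} e^{−b|x|} for constants c₂ > c₁ > 0 and a, b ≥ 0 with a + b < M_J, and that J is integrable on the unit ball with ∫_{|y|<1} J(y) e^{−b|y|} dy > 0. Then there exist constants C₀ > c₀ > 0 such that c₀ (1+|x|)^{−a} e^{−b|x|} ≤ (J * f)(x) ≤ C₀ (1+|x|)^{−a} e^{−b|x|} for all x ∈ ℝ^N. -/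
open MeasureTheory Real Set

/-! Write `w(x) = (1 + ‖x‖)^(-a) e^(-b‖x‖)`. For the lower bound, restrict the convolution integral
to the unit ball around `x`, where `w(z) ≥ 2^(-a) w(x) e^(-b‖x - z‖)`. For the upper bound, split at
`‖z‖ = ‖x‖`: outside, `w(z) ≤ w(x)` because `w` is radially decreasing; inside,
`w(z) e^(δ‖z‖) ≤ w(x) e^(δ‖x‖)` for every `δ ≥ a + b`, so the decay hypothesis on `J` at some
`δ ∈ (a + b, M_J)` bounds that part by `C(δ) w(x)`. -/

noncomputable def decayWeight {E : Type*} [Norm E] (a b : ℝ) (x : E) : ℝ :=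
  (1 + ‖x‖) ^ (-a) * exp (-b * ‖x‖)

lemma monotoneOn_one_add_rpow_neg_mul_exp {a c : ℝ} (ha : 0 ≤ a) (hac : a ≤ c) :
    MonotoneOn (fun t : ℝ => (1 + t) ^ (-a) * exp (c * t)) (Ici 0) := by
  intro s (hs : 0 ≤ s) t (ht : 0 ≤ t) hst
  have hs1 : 0 < 1 + s := by linarith
  have ht1 : 0 < 1 + t := by linarith
  have hlog : log (1 + t) ≤ log (1 + s) + (t - s) := by
    rw [← log_exp (t - s), ← log_mul hs1.ne' (exp_pos _).ne']
    refine log_le_log ht1 ?_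
    nlinarith [add_one_le_exp (t - s), mul_nonneg hs (sub_nonneg.2 hst)]
  have hslack := mul_nonneg (sub_nonneg.2 hac) (sub_nonneg.2 hst)
  simp only [rpow_def_of_pos hs1, rpow_def_of_pos ht1, ← exp_add]
  exact exp_le_exp.2 (by nlinarith [mul_le_mul_of_nonneg_left hlog ha])

section Pointwise

variable {E : Type*} [SeminormedAddCommGroup E] {a b : ℝ}

lemma decayWeight_pos (a b : ℝ) (x : E) : 0 < decayWeight a b x := by
  have : 0 < 1 + ‖x‖ := by positivity
  unfold decayWeight
  positivity

lemma decayWeight_le_one (ha : 0 ≤ a) (hb : 0 ≤ b) (x : E) : decayWeight a b x ≤ 1 :=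
  mul_le_one₀ (rpow_le_one_of_one_le_of_nonpos (by linarith [norm_nonneg x]) (by linarith))
    (exp_pos _).le (exp_le_one_iff.2 (by nlinarith [norm_nonneg x]))

lemma continuous_decayWeight (a b : ℝ) : Continuous (decayWeight (E := E) a b) :=
  ((continuous_const.add continuous_norm).rpow_const fun x => Or.inl (by positivity : (0 : ℝ) < 1 + ‖x‖).ne').mul
    (continuous_exp.comp (continuous_const.mul continuous_norm))

lemma decayWeight_le_of_norm_le (ha : 0 ≤ a) (hb : 0 ≤ b) {x z : E} (h : ‖x‖ ≤ ‖z‖) :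
    decayWeight a b z ≤ decayWeight a b x :=
  mul_le_mul (rpow_le_rpow_of_nonpos (by positivity) (by linarith) (by linarith))
    (exp_le_exp.2 (by nlinarith)) (exp_pos _).le (by positivity)

lemma decayWeight_mul_exp_le (ha : 0 ≤ a) {δ : ℝ} (hδ : a + b ≤ δ) {x z : E} (h : ‖z‖ ≤ ‖x‖) :
    decayWeight a b z * exp (δ * ‖z‖) ≤ decayWeight a b x * exp (δ * ‖x‖) := by
  have hsplit : ∀ y : E,
      decayWeight a b y * exp (δ * ‖y‖) = (1 + ‖y‖) ^ (-a) * exp ((δ - b) * ‖y‖) := by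
    intro y
    rw [decayWeight, mul_assoc, ← exp_add]
    ring_nf
  rw [hsplit, hsplit]
  exact monotoneOn_one_add_rpow_neg_mul_exp ha (by linarith) (norm_nonneg z) (norm_nonneg x) h

lemma two_rpow_neg_mul_decayWeight_mul_exp_le (ha : 0 ≤ a) (hb : 0 ≤ b) {x z : E}
    (h : ‖x - z‖ ≤ 1) :
    2 ^ (-a) * decayWeight a b x * exp (-b * ‖x - z‖) ≤ decayWeight a b z := by
  have hz : ‖z‖ ≤ ‖x‖ + ‖x - z‖ := by simpa using norm_sub_le x (x - z)
  have hpow : 2 ^ (-a) * (1 + ‖x‖) ^ (-a) ≤ (1 + ‖z‖) ^ (-a) := by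
    rw [← mul_rpow (by norm_num) (by positivity)]
    exact rpow_le_rpow_of_nonpos (by positivity) (by linarith [norm_nonneg x]) (by linarith)
  have hexp : exp (-b * ‖x‖) * exp (-b * ‖x - z‖) ≤ exp (-b * ‖z‖) := by
    rw [← exp_add]
    exact exp_le_exp.2 (by nlinarith)
  calc 2 ^ (-a) * decayWeight a b x * exp (-b * ‖x - z‖)
      = 2 ^ (-a) * (1 + ‖x‖) ^ (-a) * (exp (-b * ‖x‖) * exp (-b * ‖x - z‖)) := by
        rw [decayWeight]; ring
    _ ≤ decayWeight a b z := mul_le_mul hpow hexp (by positivity) (by positivity)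

end Pointwise

section Convolution

variable {E : Type*} [NormedAddCommGroup E] [MeasurableSpace E] [BorelSpace E]
  {μ : Measure E} [μ.IsAddLeftInvariant] [μ.IsNegInvariant] {J : E → ℝ} {a b : ℝ}

lemma integrable_comp_sub_mul_of_norm_le (hJ : Integrable J μ) {g : E → ℝ}
    (hg : AEStronglyMeasurable g μ) {c : ℝ} (hgc : ∀ z, ‖g z‖ ≤ c) (x : E) :
    Integrable (fun z => J (x - z) * g z) μ := by
  simpa only [mul_comm] using (hJ.comp_sub_left x).bdd_mul hg (ae_of_all _ hgc)

lemma integrable_comp_sub_mul_decayWeight (hJ : Integrable J μ) (ha : 0 ≤ a) (hb : 0 ≤ b)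
    (x : E) : Integrable (fun z => J (x - z) * decayWeight a b z) μ :=
  integrable_comp_sub_mul_of_norm_le hJ (continuous_decayWeight a b).aestronglyMeasurable
    (fun z => by rw [norm_of_nonneg (decayWeight_pos a b z).le]; exact decayWeight_le_one ha hb z) x

lemma integrable_comp_sub_mul_exp_neg_mul_norm (hJ : Integrable J μ) {δ : ℝ} (hδ : 0 ≤ δ)
    (x : E) : Integrable (fun z => J (x - z) * exp (-δ * ‖z‖)) μ :=
  integrable_comp_sub_mul_of_norm_le hJ
    (by fun_prop : Continuous fun z : E => exp (-δ * ‖z‖)).aestronglyMeasurable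
    (fun z => by
      rw [norm_of_nonneg (exp_pos _).le, exp_le_one_iff]
      nlinarith [norm_nonneg z]) x

lemma setIntegral_norm_le_comp_sub_mul_decayWeight_le (hJ : Integrable J μ)
    (hJnn : ∀ y, 0 ≤ J y) (ha : 0 ≤ a) (hb : 0 ≤ b) {δ C : ℝ} (hδ : a + b ≤ δ) (x : E)
    (hC : ∫ y, J (x - y) * exp (-δ * ‖y‖) ∂μ ≤ C * exp (-δ * ‖x‖)) :
    ∫ z in {z : E | ‖z‖ ≤ ‖x‖}, J (x - z) * decayWeight a b z ∂μ ≤ C * decayWeight a b x := by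
  have hJe := integrable_comp_sub_mul_exp_neg_mul_norm hJ (by linarith : 0 ≤ δ) x
  set K := decayWeight a b x * exp (δ * ‖x‖)
  have hK : 0 ≤ K := by positivity [decayWeight_pos a b x]
  have hpt : ∀ z ∈ {z : E | ‖z‖ ≤ ‖x‖},
      J (x - z) * decayWeight a b z ≤ K * (J (x - z) * exp (-δ * ‖z‖)) := by
    intro z (hz : ‖z‖ ≤ ‖x‖)
    have hw : decayWeight a b z ≤ K * exp (-δ * ‖z‖) :=
      calc decayWeight a b z = decayWeight a b z * exp (δ * ‖z‖) * exp (-δ * ‖z‖) := by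
            rw [mul_assoc, ← exp_add]; simp
        _ ≤ K * exp (-δ * ‖z‖) := by gcongr; exact decayWeight_mul_exp_le ha hδ hz
    calc J (x - z) * decayWeight a b z ≤ J (x - z) * (K * exp (-δ * ‖z‖)) :=
          mul_le_mul_of_nonneg_left hw (hJnn _)
      _ = K * (J (x - z) * exp (-δ * ‖z‖)) := by ring
  calc ∫ z in {z : E | ‖z‖ ≤ ‖x‖}, J (x - z) * decayWeight a b z ∂μ
      ≤ ∫ z in {z : E | ‖z‖ ≤ ‖x‖}, K * (J (x - z) * exp (-δ * ‖z‖)) ∂μ :=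
        setIntegral_mono_on (integrable_comp_sub_mul_decayWeight hJ ha hb x).integrableOn
          (hJe.const_mul K).integrableOn (measurableSet_le measurable_norm measurable_const) hpt
    _ = K * ∫ z in {z : E | ‖z‖ ≤ ‖x‖}, J (x - z) * exp (-δ * ‖z‖) ∂μ := integral_const_mul _ _
    _ ≤ K * (C * exp (-δ * ‖x‖)) := by
        refine mul_le_mul_of_nonneg_left ((setIntegral_le_integral hJe ?_).trans hC) hK
        exact ae_of_all _ fun z => mul_nonneg (hJnn _) (exp_pos _).le
    _ = C * decayWeight a b x := by
        rw [mul_mul_mul_comm, ← exp_add]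
        simp [mul_comm]

lemma setIntegral_norm_le_compl_comp_sub_mul_decayWeight_le (hJ : Integrable J μ)
    (hJnn : ∀ y, 0 ≤ J y) (ha : 0 ≤ a) (hb : 0 ≤ b) (x : E) :
    ∫ z in {z : E | ‖z‖ ≤ ‖x‖}ᶜ, J (x - z) * decayWeight a b z ∂μ
      ≤ (∫ y, J y ∂μ) * decayWeight a b x := by
  have hpt : ∀ z ∈ {z : E | ‖z‖ ≤ ‖x‖}ᶜ,
      J (x - z) * decayWeight a b z ≤ J (x - z) * decayWeight a b x :=
    fun z hz => mul_le_mul_of_nonneg_left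
      (decayWeight_le_of_norm_le ha hb (le_of_lt (not_le.1 hz))) (hJnn _)
  calc ∫ z in {z : E | ‖z‖ ≤ ‖x‖}ᶜ, J (x - z) * decayWeight a b z ∂μ
      ≤ ∫ z in {z : E | ‖z‖ ≤ ‖x‖}ᶜ, J (x - z) * decayWeight a b x ∂μ :=
        setIntegral_mono_on (integrable_comp_sub_mul_decayWeight hJ ha hb x).integrableOn
          ((hJ.comp_sub_left x).mul_const _).integrableOn
          (measurableSet_le measurable_norm measurable_const).compl hpt
    _ = (∫ z in {z : E | ‖z‖ ≤ ‖x‖}ᶜ, J (x - z) ∂μ) * decayWeight a b x := integral_mul_const _ _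
    _ ≤ (∫ z, J (x - z) ∂μ) * decayWeight a b x :=
        mul_le_mul_of_nonneg_right
          (setIntegral_le_integral (hJ.comp_sub_left x) (ae_of_all _ fun z => hJnn _))
          (decayWeight_pos a b x).le
    _ = (∫ y, J y ∂μ) * decayWeight a b x := by rw [integral_sub_left_eq_self J μ x]

lemma integral_comp_sub_mul_decayWeight_le (hJ : Integrable J μ) (hJnn : ∀ y, 0 ≤ J y)
    (ha : 0 ≤ a) (hb : 0 ≤ b) {δ C : ℝ} (hδ : a + b ≤ δ) (x : E)
    (hC : ∫ y, J (x - y) * exp (-δ * ‖y‖) ∂μ ≤ C * exp (-δ * ‖x‖)) :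
    ∫ z, J (x - z) * decayWeight a b z ∂μ ≤ (C + ∫ y, J y ∂μ) * decayWeight a b x := by
  rw [← integral_add_compl (measurableSet_le measurable_norm measurable_const)
    (integrable_comp_sub_mul_decayWeight hJ ha hb x), add_mul]
  exact add_le_add (setIntegral_norm_le_comp_sub_mul_decayWeight_le hJ hJnn ha hb hδ x hC)
    (setIntegral_norm_le_compl_comp_sub_mul_decayWeight_le hJ hJnn ha hb x)

lemma integral_comp_sub_mul_le (hJ : Integrable J μ) (hJnn : ∀ y, 0 ≤ J y)
    (ha : 0 ≤ a) (hb : 0 ≤ b) {δ C : ℝ} (hδ : a + b ≤ δ) (x : E)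
    (hC : ∫ y, J (x - y) * exp (-δ * ‖y‖) ∂μ ≤ C * exp (-δ * ‖x‖))
    {f : E → ℝ} {c : ℝ} (hc : 0 ≤ c) (hf : ∀ z, f z ≤ c * decayWeight a b z)
    (hJf : Integrable (fun z => J (x - z) * f z) μ) :
    ∫ z, J (x - z) * f z ∂μ ≤ c * (C + ∫ y, J y ∂μ) * decayWeight a b x := by
  have hJw := integrable_comp_sub_mul_decayWeight hJ ha hb x
  calc ∫ z, J (x - z) * f z ∂μ ≤ ∫ z, c * (J (x - z) * decayWeight a b z) ∂μ :=
        integral_mono hJf (hJw.const_mul c) fun z =>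
          (mul_le_mul_of_nonneg_left (hf z) (hJnn _)).trans_eq (by ring)
    _ = c * ∫ z, J (x - z) * decayWeight a b z ∂μ := integral_const_mul _ _
    _ ≤ c * ((C + ∫ y, J y ∂μ) * decayWeight a b x) :=
        mul_le_mul_of_nonneg_left (integral_comp_sub_mul_decayWeight_le hJ hJnn ha hb hδ x hC) hc
    _ = c * (C + ∫ y, J y ∂μ) * decayWeight a b x := by ring

lemma setIntegral_ball_comp_sub (g : E → ℝ) (x : E) (r : ℝ) :
    ∫ z in Metric.ball x r, g (x - z) ∂μ = ∫ y in {y : E | ‖y‖ < r}, g y ∂μ := by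
  have hball : (fun z => x - z) ⁻¹' {y : E | ‖y‖ < r} = Metric.ball x r := by
    ext z
    simp [dist_eq_norm, norm_sub_rev]
  rw [← hball]
  exact (Measure.measurePreserving_sub_left μ x).setIntegral_preimage_emb
    (MeasurableEquiv.subLeft x).measurableEmbedding g _

lemma le_integral_comp_sub_mul (hJ : Integrable J μ) (hJnn : ∀ y, 0 ≤ J y)
    (ha : 0 ≤ a) (hb : 0 ≤ b) {f : E → ℝ} {c : ℝ} (hc : 0 ≤ c)
    (hf : ∀ z, c * decayWeight a b z ≤ f z) (x : E)
    (hJf : Integrable (fun z => J (x - z) * f z) μ) :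
    c * 2 ^ (-a) * (∫ y in {y : E | ‖y‖ < 1}, J y * exp (-b * ‖y‖) ∂μ) * decayWeight a b x
      ≤ ∫ z, J (x - z) * f z ∂μ := by
  have hJe : Integrable (fun z => J (x - z) * exp (-b * ‖x - z‖)) μ :=
    integrable_comp_sub_mul_of_norm_le hJ
      (by fun_prop : Continuous fun z : E => exp (-b * ‖x - z‖)).aestronglyMeasurable
      (fun z => by
        rw [norm_of_nonneg (exp_pos _).le, exp_le_one_iff]
        nlinarith [norm_nonneg (x - z)]) x
  set k := c * 2 ^ (-a) * decayWeight a b x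
  have hpt : ∀ z ∈ Metric.ball x 1, k * (J (x - z) * exp (-b * ‖x - z‖)) ≤ J (x - z) * f z := by
    intro z hz
    rw [Metric.mem_ball, dist_comm, dist_eq_norm] at hz
    have hw := two_rpow_neg_mul_decayWeight_mul_exp_le ha hb hz.le
    calc k * (J (x - z) * exp (-b * ‖x - z‖))
        = J (x - z) * (c * (2 ^ (-a) * decayWeight a b x * exp (-b * ‖x - z‖))) := by ring
      _ ≤ J (x - z) * f z :=
          mul_le_mul_of_nonneg_left ((mul_le_mul_of_nonneg_left hw hc).trans (hf z)) (hJnn _)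
  calc c * 2 ^ (-a) * (∫ y in {y : E | ‖y‖ < 1}, J y * exp (-b * ‖y‖) ∂μ) * decayWeight a b x
      = ∫ z in Metric.ball x 1, k * (J (x - z) * exp (-b * ‖x - z‖)) ∂μ := by
        rw [integral_const_mul, setIntegral_ball_comp_sub (fun y => J y * exp (-b * ‖y‖))]; ring
    _ ≤ ∫ z in Metric.ball x 1, J (x - z) * f z ∂μ :=
        setIntegral_mono_on (hJe.const_mul k).integrableOn hJf.integrableOn
          Metric.isOpen_ball.measurableSet hpt
    _ ≤ ∫ z, J (x - z) * f z ∂μ :=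
        setIntegral_le_integral hJf (ae_of_all _ fun z =>
          mul_nonneg (hJnn _) ((mul_nonneg hc (decayWeight_pos a b z).le).trans (hf z)))

end Convolution

theorem stmt_1_general (N : ℕ)
    (J f : EuclideanSpace ℝ (Fin N) → ℝ)
    (hJpos : ∀ y, 0 < J y)
    (hJint : Integrable J)
    (M_J : ℝ)
    (hE : ∀ δ : ℝ, 0 < δ → δ < M_J → ∃ C : ℝ, ∀ x : EuclideanSpace ℝ (Fin N),
      (∫ y, J (x - y) * Real.exp (-δ * ‖y‖)) ≤ C * Real.exp (-δ * ‖x‖))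
    (a b c₁ c₂ : ℝ) (ha : 0 ≤ a) (hb : 0 ≤ b) (hab : a + b < M_J)
    (hc₁ : 0 < c₁) (hc₁₂ : c₁ < c₂)
    (hfint : Integrable f)
    (hflb : ∀ x, c₁ * ((1 + ‖x‖) ^ (-a) * Real.exp (-b * ‖x‖)) ≤ f x)
    (hfub : ∀ x, f x ≤ c₂ * ((1 + ‖x‖) ^ (-a) * Real.exp (-b * ‖x‖)))
    (hJball : 0 < ∫ y in {y : EuclideanSpace ℝ (Fin N) | ‖y‖ < 1},
      J y * Real.exp (-b * ‖y‖)) :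
    ∃ c₀ C₀ : ℝ, 0 < c₀ ∧ c₀ < C₀ ∧ ∀ x : EuclideanSpace ℝ (Fin N),
      c₀ * ((1 + ‖x‖) ^ (-a) * Real.exp (-b * ‖x‖)) ≤ (∫ z, J (x - z) * f z) ∧
      (∫ z, J (x - z) * f z) ≤ C₀ * ((1 + ‖x‖) ^ (-a) * Real.exp (-b * ‖x‖)) := by
  change ∀ x, c₁ * decayWeight a b x ≤ f x at hflb
  change ∀ x, f x ≤ c₂ * decayWeight a b x at hfub
  obtain ⟨δ, hδ, hδM⟩ := exists_between hab
  obtain ⟨C, hC⟩ := hE δ (by linarith) hδM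
  have hJnn : ∀ y, 0 ≤ J y := fun y => (hJpos y).le
  have hJf : ∀ x, Integrable (fun z => J (x - z) * f z) :=
    integrable_comp_sub_mul_of_norm_le hJint hfint.1 (c := c₂) fun z => by
      rw [norm_of_nonneg ((mul_nonneg hc₁.le (decayWeight_pos a b z).le).trans (hflb z))]
      nlinarith [hfub z, decayWeight_le_one ha hb z]
  set c₀ := c₁ * 2 ^ (-a) * ∫ y in {y : EuclideanSpace ℝ (Fin N) | ‖y‖ < 1}, J y * exp (-b * ‖y‖)
  have hc₀ : 0 < c₀ := mul_pos (mul_pos hc₁ (rpow_pos_of_pos two_pos _)) hJball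
  set C₀ := max (c₂ * (C + ∫ y, J y)) c₀ + 1
  refine ⟨c₀, C₀, hc₀, by linarith [le_max_right (c₂ * (C + ∫ y, J y)) c₀], fun x => ⟨?_, ?_⟩⟩
  · exact le_integral_comp_sub_mul hJint hJnn ha hb hc₁.le hflb x (hJf x)
  · calc ∫ z, J (x - z) * f z ≤ c₂ * (C + ∫ y, J y) * decayWeight a b x :=
          integral_comp_sub_mul_le hJint hJnn ha hb hδ.le x (hC x) (by linarith) hfub (hJf x)
      _ ≤ C₀ * decayWeight a b x :=
          mul_le_mul_of_nonneg_right (by linarith [le_max_left (c₂ * (C + ∫ y, J y)) c₀])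
            (decayWeight_pos a b x).le

theorem stmt_1 (N : ℕ) (hN : 1 ≤ N)
    (J f : EuclideanSpace ℝ (Fin N) → ℝ)
    (hJmeas : Measurable J) (hJpos : ∀ y, 0 < J y)
    (hJint : Integrable J)
    (M_J : ℝ) (hM : 0 < M_J)
    (hE : ∀ δ : ℝ, 0 < δ → δ < M_J → ∃ C : ℝ, ∀ x : EuclideanSpace ℝ (Fin N),
      (∫ y, J (x - y) * Real.exp (-δ * ‖y‖)) ≤ C * Real.exp (-δ * ‖x‖))
    (a b c₁ c₂ : ℝ) (ha : 0 ≤ a) (hb : 0 ≤ b) (hab : a + b < M_J)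
    (hc₁ : 0 < c₁) (hc₁₂ : c₁ < c₂)
    (hfint : Integrable f)
    (hflb : ∀ x, c₁ * ((1 + ‖x‖) ^ (-a) * Real.exp (-b * ‖x‖)) ≤ f x)
    (hfub : ∀ x, f x ≤ c₂ * ((1 + ‖x‖) ^ (-a) * Real.exp (-b * ‖x‖)))
    (hJball : 0 < ∫ y in {y : EuclideanSpace ℝ (Fin N) | ‖y‖ < 1},
      J y * Real.exp (-b * ‖y‖)) :
    ∃ c₀ C₀ : ℝ, 0 < c₀ ∧ c₀ < C₀ ∧ ∀ x : EuclideanSpace ℝ (Fin N),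
      c₀ * ((1 + ‖x‖) ^ (-a) * Real.exp (-b * ‖x‖)) ≤ (∫ z, J (x - z) * f z) ∧
      (∫ z, J (x - z) * f z) ≤ C₀ * ((1 + ‖x‖) ^ (-a) * Real.exp (-b * ‖x‖)) :=
  stmt_1_general N J f hJpos hJint M_J hE a b c₁ c₂ ha hb hab hc₁ hc₁₂ hfint hflb hfub hJball
end

section
/- Let J ∈ L^1(ℝ^N) be a positive kernel satisfying the power-decay condition: for every 0 < b < N there is C(b) with ∫ J(x−y)|y|^{−b} dy ≤ C(b)(1+|x|)^{−b} for all x. Suppose f is locally integrable with c₁(1+|x|)^{−a} ≤ f(x) ≤ c₂(1+|x|)^{−a} for some 0 < a < N and constants c₂ > c₁ > 0, and ∫_{|y|<1} J(y) dy > 0. Then there exist C₀ > c₀ > 0 with c₀(1+|x|)^{−a} ≤ (J*f)(x) ≤ C₀(1+|x|)^{−a} for all x ∈ ℝ^N. -/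
open MeasureTheory Real Metric Set
open scoped ENNReal

variable {E : Type*} [NormedAddCommGroup E] [NormedSpace ℝ E] [FiniteDimensional ℝ E]
  [MeasurableSpace E] [BorelSpace E] {μ : Measure E} [μ.IsAddHaarMeasure]

lemma riesz_integrableOn {a : ℝ} (ha : 0 < a) (haN : a < Module.finrank ℝ E) :
    IntegrableOn (fun z : E => ‖z‖ ^ (-a)) (ball (0 : E) 1) μ := by
  have hmeas : Measurable fun z : E => ‖z‖ ^ (-a) := by fun_prop
  constructor
  · exact hmeas.aestronglyMeasurable
  · have hnn : ∀ z : E, 0 ≤ ‖z‖ ^ (-a) := fun z => rpow_nonneg (norm_nonneg z) _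
    rw [HasFiniteIntegral, lintegral_enorm_of_nonneg fun z => hnn z]
    rw [lintegral_eq_lintegral_meas_le (μ.restrict (ball (0:E) 1))
      (ae_of_all _ hnn) hmeas.aemeasurable]
    set g : ℝ → ENNReal := fun t => (μ.restrict (ball (0:E) 1)) {z : E | t ≤ ‖z‖ ^ (-a)} with hg
    have hsub : ∀ t : ℝ, 0 < t →
        {z : E | t ≤ ‖z‖ ^ (-a)} ⊆ closedBall (0 : E) (t ^ (-a⁻¹)) := by
      intro t ht z hz
      simp only [mem_setOf_eq] at hz
      rcases eq_or_ne z 0 with rfl | hz0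
      · simp only [norm_zero] at hz
        rw [Real.zero_rpow (by linarith : -a ≠ 0)] at hz
        linarith
      · have hznorm : 0 < ‖z‖ := norm_pos_iff.mpr hz0
        rw [mem_closedBall_zero_iff]
        rw [show (-a⁻¹ : ℝ) = (-a)⁻¹ by rw [neg_inv]]
        exact (Real.le_rpow_inv_iff_of_neg hznorm ht (by linarith)).mpr hz
    calc ∫⁻ t in Set.Ioi (0:ℝ), g t
        ≤ ∫⁻ t in Set.Ioc 0 1 ∪ Set.Ioi 1, g t :=
          lintegral_mono_set Ioi_subset_Ioc_union_Ioi
      _ ≤ (∫⁻ t in Set.Ioc 0 1, g t) + ∫⁻ t in Set.Ioi 1, g t := lintegral_union_le _ _ _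
      _ < ∞ := by
          refine ENNReal.add_lt_top.2 ⟨?_, ?_⟩
          · calc (∫⁻ t in Set.Ioc (0:ℝ) 1, g t)
                ≤ ∫⁻ _ in Set.Ioc (0:ℝ) 1, μ (ball (0:E) 1) := by
                  refine setLIntegral_mono' measurableSet_Ioc fun t _ => ?_
                  calc g t ≤ (μ.restrict (ball (0:E) 1)) Set.univ := measure_mono (subset_univ _)
                    _ = μ (ball (0:E) 1) := by simp
              _ < ∞ := by
                  rw [setLIntegral_const]
                  exact ENNReal.mul_lt_top measure_ball_lt_top (by simp [measure_Ioc_lt_top])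
          · have hb : ∀ t ∈ Set.Ioi (1:ℝ), g t
                ≤ ENNReal.ofReal (t ^ (-a⁻¹ * Module.finrank ℝ E)) * μ (ball (0:E) 1) := by
              intro t ht
              have ht0 : (0:ℝ) < t := lt_trans one_pos ht
              have hr : (0:ℝ) ≤ t ^ (-a⁻¹) := rpow_nonneg ht0.le _
              calc g t ≤ μ (closedBall (0:E) (t ^ (-a⁻¹))) :=
                    le_trans (Measure.restrict_le_self _) (measure_mono (hsub t ht0))
                _ = ENNReal.ofReal ((t ^ (-a⁻¹)) ^ Module.finrank ℝ E) * μ (ball (0:E) 1) :=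
                    Measure.addHaar_closedBall _ _ hr
                _ = ENNReal.ofReal (t ^ (-a⁻¹ * Module.finrank ℝ E)) * μ (ball (0:E) 1) := by
                    rw [← Real.rpow_natCast (t ^ (-a⁻¹)) _, ← Real.rpow_mul ht0.le]
            calc (∫⁻ t in Set.Ioi (1:ℝ), g t)
                ≤ ∫⁻ t in Set.Ioi (1:ℝ),
                    ENNReal.ofReal (t ^ (-a⁻¹ * Module.finrank ℝ E)) * μ (ball (0:E) 1) :=
                  setLIntegral_mono' measurableSet_Ioi hb
              _ = (∫⁻ t in Set.Ioi (1:ℝ),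
                    ENNReal.ofReal (t ^ (-a⁻¹ * Module.finrank ℝ E))) * μ (ball (0:E) 1) := by
                  rw [lintegral_mul_const' _ _ measure_ball_lt_top.ne]
              _ < ∞ := by
                  refine ENNReal.mul_lt_top ?_ measure_ball_lt_top
                  refine IntegrableOn.setLIntegral_lt_top ?_
                  refine integrableOn_Ioi_rpow_of_lt ?_ one_pos
                  rw [neg_mul, neg_lt_neg_iff]
                  rw [inv_mul_eq_div, lt_div_iff₀ (by linarith : (0:ℝ) < a)]
                  linarith

lemma ae_integrable_conv {J : E → ℝ} (hJm : Measurable J) (hJint : Integrable J μ)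
    {a : ℝ} (ha : 0 < a) (haN : a < Module.finrank ℝ E) :
    ∀ᵐ x ∂μ, Integrable (fun z => J (x - z) * ‖z‖ ^ (-a)) μ := by
  set w : E → ℝ≥0∞ := fun z => ENNReal.ofReal (‖z‖ ^ (-a)) with hw
  have hwm : Measurable w := by fun_prop
  have hwball : (∫⁻ z in ball (0:E) 1, w z ∂μ) < ∞ :=
    (riesz_integrableOn ha haN).setLIntegral_lt_top
  -- the key translation bound
  have key : ∀ (R : ℝ) (u : E),
      (∫⁻ x in ball (0:E) R, w (x - u) ∂μ) ≤ (∫⁻ z in ball (0:E) 1, w z ∂μ) + μ (ball (0:E) R) := by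
    intro R u
    have hpt : ∀ x : E, w (x - u) ≤ (ball (0:E) 1).indicator w (x - u) + 1 := by
      intro x
      by_cases hx : x - u ∈ ball (0:E) 1
      · rw [Set.indicator_of_mem hx]; exact le_add_of_le_of_nonneg le_rfl bot_le
      · rw [Set.indicator_of_notMem hx]
        rw [zero_add]
        have h1 : (1:ℝ) ≤ ‖x - u‖ := by
          simp only [mem_ball, dist_zero_right, not_lt] at hx; exact hx
        calc w (x - u) ≤ ENNReal.ofReal 1 := by
              apply ENNReal.ofReal_le_ofReal
              exact Real.rpow_le_one_of_one_le_of_nonpos h1 (by linarith)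
          _ = 1 := by simp
    calc (∫⁻ x in ball (0:E) R, w (x - u) ∂μ)
        ≤ ∫⁻ x in ball (0:E) R, ((ball (0:E) 1).indicator w (x - u) + 1) ∂μ :=
          lintegral_mono fun x => hpt x
      _ = (∫⁻ x in ball (0:E) R, (ball (0:E) 1).indicator w (x - u) ∂μ)
          + μ (ball (0:E) R) := by
          rw [lintegral_add_right _ measurable_const]
          simp
      _ ≤ (∫⁻ x, (ball (0:E) 1).indicator w (x - u) ∂μ) + μ (ball (0:E) R) := by
          gcongr
          exact Measure.restrict_le_self
      _ = (∫⁻ z in ball (0:E) 1, w z ∂μ) + μ (ball (0:E) R) := by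
          congr 1
          rw [(measurePreserving_sub_right μ u).lintegral_comp
            (hwm.indicator measurableSet_ball)]
          exact lintegral_indicator measurableSet_ball _
  -- double integral bound
  have hJm2 : Measurable fun p : E × E => (‖J p.2‖₊ : ℝ≥0∞) * w (p.1 - p.2) := by
    fun_prop
  have step2 : ∀ n : ℕ,
      (∫⁻ x in ball (0:E) n, ∫⁻ z, (‖J (x - z)‖₊ : ℝ≥0∞) * w z ∂μ ∂μ) < ∞ := by
    intro n
    have inner_eq : ∀ x : E, (∫⁻ z, (‖J (x - z)‖₊ : ℝ≥0∞) * w z ∂μ)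
        = ∫⁻ u', (‖J u'‖₊ : ℝ≥0∞) * w (x - u') ∂μ := by
      intro x
      rw [← (Measure.measurePreserving_sub_left μ x).lintegral_comp
        (f := fun u' => (‖J u'‖₊ : ℝ≥0∞) * w (x - u')) (by fun_prop)]
      refine lintegral_congr fun z => ?_
      rw [sub_sub_cancel]
    calc (∫⁻ x in ball (0:E) n, ∫⁻ z, (‖J (x - z)‖₊ : ℝ≥0∞) * w z ∂μ ∂μ)
        = ∫⁻ x in ball (0:E) n, ∫⁻ u', (‖J u'‖₊ : ℝ≥0∞) * w (x - u') ∂μ ∂μ := by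
          exact lintegral_congr fun x => inner_eq x
      _ = ∫⁻ u', ∫⁻ x in ball (0:E) n, (‖J u'‖₊ : ℝ≥0∞) * w (x - u') ∂μ ∂μ := by
          exact lintegral_lintegral_swap (hJm2.aemeasurable)
      _ ≤ ∫⁻ u', (‖J u'‖₊ : ℝ≥0∞) * ((∫⁻ z in ball (0:E) 1, w z ∂μ) + μ (ball (0:E) n)) ∂μ := by
          refine lintegral_mono fun u' => ?_
          rw [lintegral_const_mul _ (by fun_prop)]
          exact mul_le_mul_right (key n u') _
      _ = (∫⁻ u', (‖J u'‖₊ : ℝ≥0∞) ∂μ) * ((∫⁻ z in ball (0:E) 1, w z ∂μ) + μ (ball (0:E) n)) := by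
          rw [lintegral_mul_const' _ _ (by
            exact (ENNReal.add_lt_top.2 ⟨hwball, measure_ball_lt_top⟩).ne)]
      _ < ∞ := by
          exact ENNReal.mul_lt_top hJint.2 (ENNReal.add_lt_top.2 ⟨hwball, measure_ball_lt_top⟩)
  -- conclude
  have hFm : Measurable fun x : E => ∫⁻ z, (‖J (x - z)‖₊ : ℝ≥0∞) * w z ∂μ := by
    have : Measurable fun p : E × E => (‖J (p.1 - p.2)‖₊ : ℝ≥0∞) * w p.2 := by fun_prop
    exact this.lintegral_prod_right'
  have hae : ∀ᵐ x ∂μ, (∫⁻ z, (‖J (x - z)‖₊ : ℝ≥0∞) * w z ∂μ) < ∞ := by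
    have h1 : ∀ n : ℕ, ∀ᵐ x ∂μ, x ∈ ball (0:E) n →
        (∫⁻ z, (‖J (x - z)‖₊ : ℝ≥0∞) * w z ∂μ) < ∞ := by
      intro n
      exact (ae_restrict_iff' measurableSet_ball).mp (ae_lt_top hFm (step2 n).ne)
    rw [← ae_all_iff] at h1
    filter_upwards [h1] with x hx
    obtain ⟨n, hn⟩ := exists_nat_gt ‖x‖
    exact hx n (by simpa [mem_ball, dist_zero_right] using hn)
  filter_upwards [hae] with x hx
  constructor
  · exact ((hJm.comp (measurable_const.sub measurable_id)).mul (by fun_prop)).aestronglyMeasurable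
  · rw [HasFiniteIntegral]
    have : ∀ z : E, (‖J (x - z) * ‖z‖ ^ (-a)‖₊ : ℝ≥0∞) = (‖J (x - z)‖₊ : ℝ≥0∞) * w z := by
      intro z
      rw [nnnorm_mul, ENNReal.coe_mul]
      congr 1
      exact Real.enorm_eq_ofReal (rpow_nonneg (norm_nonneg z) _)
    simp only [enorm_eq_nnnorm]; rw [lintegral_congr this]
    exact hx

lemma rpow_two_bound {a u v : ℝ} (ha : 0 ≤ a) (hv : 0 < v) (hu : 0 < u) (h : v ≤ 2 * u) :
    u ^ (-a) ≤ 2 ^ a * v ^ (-a) := by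
  have h1 : (2 * u) ^ (-a) ≤ v ^ (-a) := Real.rpow_le_rpow_of_nonpos hv h (by linarith)
  have h2 : (2 * u : ℝ) ^ (-a) = 2 ^ (-a) * u ^ (-a) := Real.mul_rpow (by norm_num) hu.le
  have h3 : (2:ℝ) ^ a * (2:ℝ) ^ (-a) = 1 := by
    rw [← Real.rpow_add two_pos]; simp
  calc u ^ (-a) = 2 ^ a * (2 ^ (-a) * u ^ (-a)) := by rw [← mul_assoc, h3, one_mul]
    _ = 2 ^ a * (2 * u) ^ (-a) := by rw [h2]
    _ ≤ 2 ^ a * v ^ (-a) :=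
        mul_le_mul_of_nonneg_left h1 (rpow_nonneg (by norm_num) a)

lemma integrable_mul_bdd {α : Type*} [MeasurableSpace α] {μ : Measure α} {F g : α → ℝ}
    (hF : Integrable F μ) (hg : AEStronglyMeasurable g μ) {c : ℝ} (hgb : ∀ z, ‖g z‖ ≤ c) :
    Integrable (fun z => F z * g z) μ :=
  (hF.bdd_mul hg (ae_of_all _ hgb)).congr (ae_of_all _ fun z => mul_comm _ _)

theorem stmt_4 (N : ℕ) (hN : 1 ≤ N)
    (J f : EuclideanSpace ℝ (Fin N) → ℝ)
    (hJpos : ∀ y, 0 < J y) (hJint : Integrable J)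
    (hP : ∀ b : ℝ, 0 < b → b < N → ∃ C : ℝ, ∀ x : EuclideanSpace ℝ (Fin N),
      (∫ y, J (x - y) * ‖y‖ ^ (-b)) ≤ C * (1 + ‖x‖) ^ (-b))
    (a c₁ c₂ : ℝ) (ha : 0 < a) (haN : a < N) (hc₁ : 0 < c₁) (hc₁₂ : c₁ < c₂)
    (hfloc : LocallyIntegrable f)
    (hflb : ∀ x, c₁ * (1 + ‖x‖) ^ (-a) ≤ f x)
    (hfub : ∀ x, f x ≤ c₂ * (1 + ‖x‖) ^ (-a))
    (hJball : 0 < ∫ y in {y : EuclideanSpace ℝ (Fin N) | ‖y‖ < 1}, J y) :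
    ∃ c₀ C₀ : ℝ, 0 < c₀ ∧ c₀ < C₀ ∧ ∀ x : EuclideanSpace ℝ (Fin N),
      c₀ * (1 + ‖x‖) ^ (-a) ≤ (∫ z, J (x - z) * f z) ∧
      (∫ z, J (x - z) * f z) ≤ C₀ * (1 + ‖x‖) ^ (-a) := by
  classical
  have hc₂ : 0 < c₂ := lt_trans hc₁ hc₁₂
  haveI : Nontrivial (EuclideanSpace ℝ (Fin N)) := by
    refine nontrivial_of_ne (EuclideanSpace.single (⟨0, hN⟩ : Fin N) (1:ℝ)) 0 fun h => ?_
    have := congrArg (fun v => v (⟨0, hN⟩ : Fin N)) h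
    simp [EuclideanSpace.single_apply] at this
  have haN' : a < Module.finrank ℝ (EuclideanSpace ℝ (Fin N)) := by
    rwa [finrank_euclideanSpace_fin]
  -- measurable representative of J
  have hsm := hJint.aestronglyMeasurable
  have hJ'm : Measurable (hsm.mk J) := hsm.stronglyMeasurable_mk.measurable
  have hJJ' : J =ᵐ[volume] hsm.mk J := hsm.ae_eq_mk
  have hJ'int : Integrable (hsm.mk J) := hJint.congr hJJ'
  have hae : ∀ᵐ x : EuclideanSpace ℝ (Fin N),
      Integrable (fun z => J (x - z) * ‖z‖ ^ (-a)) := by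
    filter_upwards [ae_integrable_conv hJ'm hJ'int ha haN'] with x hx
    refine hx.congr ?_
    have hcomp : ((hsm.mk J) ∘ fun z => x - z) =ᵐ[volume] (J ∘ fun z => x - z) :=
      (Measure.measurePreserving_sub_left volume x).quasiMeasurePreserving.ae_eq_comp hJJ'.symm
    filter_upwards [hcomp] with z hz
    simp only [Function.comp_apply] at hz
    rw [hz]
  -- basic positivity facts
  have h2a : (0:ℝ) < 2 ^ a := rpow_pos_of_pos two_pos a
  have h2na : (0:ℝ) < 2 ^ (-a) := rpow_pos_of_pos two_pos (-a)
  have hprod : (2:ℝ) ^ a * 2 ^ (-a) = 1 := by rw [← Real.rpow_add two_pos]; simp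
  -- the profile function
  set hfn : EuclideanSpace ℝ (Fin N) → ℝ := fun z => (1 + ‖z‖) ^ (-a) with hhfn
  have hfn_cont : Continuous hfn := by
    apply Continuous.rpow_const (continuous_const.add continuous_norm)
    intro z; left; exact (by positivity : (0:ℝ) < 1 + ‖z‖).ne'
  have hfn_pos : ∀ z, 0 < hfn z := fun z => rpow_pos_of_pos (by positivity) _
  have hfn_le_one : ∀ z, hfn z ≤ 1 := fun z =>
    Real.rpow_le_one_of_one_le_of_nonpos (by simp [norm_nonneg]) (by linarith)
  have hf_pos : ∀ z, 0 < f z := fun z =>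
    lt_of_lt_of_le (by positivity) (hflb z)
  -- integrability of the convolution integrands
  have F1 : ∀ x, Integrable (fun z => J (x - z) * f z) := by
    intro x
    refine integrable_mul_bdd (hJint.comp_sub_left x) hfloc.aestronglyMeasurable
      (c := c₂) fun z => ?_
    rw [Real.norm_eq_abs, abs_of_pos (hf_pos z)]
    calc f z ≤ c₂ * hfn z := hfub z
      _ ≤ c₂ * 1 := mul_le_mul_of_nonneg_left (hfn_le_one z) hc₂.le
      _ = c₂ := mul_one _
  have F2 : ∀ x, Integrable (fun z => J (x - z) * hfn z) := by
    intro x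
    refine integrable_mul_bdd (hJint.comp_sub_left x) hfn_cont.aestronglyMeasurable
      (c := 1) fun z => ?_
    rw [Real.norm_eq_abs, abs_of_pos (hfn_pos z)]
    exact hfn_le_one z
  -- constants
  obtain ⟨Ca, hCa⟩ := hP a ha haN
  set C' := max Ca 0 with hC'
  have hC'0 : 0 ≤ C' := le_max_right _ _
  set I := ∫ y in {y : EuclideanSpace ℝ (Fin N) | ‖y‖ < 1}, J y with hI
  set c₀ := c₁ * (2 ^ (-a) * I) with hc₀def
  set Cpre := c₂ * (2 ^ a * (C' * 2 ^ a)) with hCpre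
  refine ⟨c₀, max Cpre c₀ + 1, by positivity, by
      have := le_max_right Cpre c₀; linarith, fun x => ?_⟩
  have hbase : (0:ℝ) < 1 + ‖x‖ := by positivity
  have hpow_pos : (0:ℝ) < (1 + ‖x‖) ^ (-a) := rpow_pos_of_pos hbase _
  constructor
  · -- lower bound
    set S := (fun z : EuclideanSpace ℝ (Fin N) => x - z) ⁻¹' (ball (0 : EuclideanSpace ℝ (Fin N)) 1)
      with hSdef
    have hS : MeasurableSet S := (measurable_const.sub measurable_id) measurableSet_ball
    have hset : (∫ z in S, J (x - z)) = I := by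
      rw [(Measure.measurePreserving_sub_left volume x).setIntegral_preimage_emb
        (MeasurableEquiv.subLeft x).measurableEmbedding J (ball 0 1)]
      rw [hI, show (ball (0 : EuclideanSpace ℝ (Fin N)) 1)
        = {y : EuclideanSpace ℝ (Fin N) | ‖y‖ < 1} from by ext y; simp [mem_ball, dist_zero_right]]
    have step1 : c₀ * (1 + ‖x‖) ^ (-a)
        ≤ ∫ z in S, J (x - z) * f z := by
      have key : (∫ z in S, J (x - z) * (c₁ * (2 ^ (-a) * (1 + ‖x‖) ^ (-a))))
          ≤ ∫ z in S, J (x - z) * f z := by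
        refine setIntegral_mono_on
          (((hJint.comp_sub_left x).mul_const _).integrableOn)
          ((F1 x).integrableOn) hS fun z hz => ?_
        refine mul_le_mul_of_nonneg_left ?_ (hJpos _).le
        have hzx : ‖z‖ < ‖x‖ + 1 := by
          have h1 : ‖x - z‖ < 1 := by
            have hz' := hz
            rw [hSdef] at hz'
            simpa [mem_ball, dist_zero_right] using hz'
          calc ‖z‖ = ‖x - (x - z)‖ := by rw [sub_sub_cancel]
            _ ≤ ‖x‖ + ‖x - z‖ := norm_sub_le _ _
            _ < ‖x‖ + 1 := by linarith
        have hb : (1 + ‖x‖) ^ (-a) ≤ 2 ^ a * (1 + ‖z‖) ^ (-a) :=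
          rpow_two_bound ha.le (by positivity) hbase (by linarith [norm_nonneg x])
        calc c₁ * (2 ^ (-a) * (1 + ‖x‖) ^ (-a))
            ≤ c₁ * (2 ^ (-a) * (2 ^ a * (1 + ‖z‖) ^ (-a))) := by
              refine mul_le_mul_of_nonneg_left ?_ hc₁.le
              exact mul_le_mul_of_nonneg_left hb h2na.le
          _ = c₁ * (1 + ‖z‖) ^ (-a) := by
              linear_combination c₁ * ((1 + ‖z‖) ^ (-a)) * hprod
          _ ≤ f z := hflb z
      calc c₀ * (1 + ‖x‖) ^ (-a)
          = (∫ z in S, J (x - z)) * (c₁ * (2 ^ (-a) * (1 + ‖x‖) ^ (-a))) := by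
            rw [hset, hc₀def]; ring
        _ = ∫ z in S, J (x - z) * (c₁ * (2 ^ (-a) * (1 + ‖x‖) ^ (-a))) :=
            (integral_mul_const _ _).symm
        _ ≤ ∫ z in S, J (x - z) * f z := key
    refine le_trans step1 (setIntegral_le_integral (F1 x)
      (ae_of_all _ fun z => mul_nonneg (hJpos _).le (hf_pos z).le))
  · -- upper bound
    -- pick a good point x' near x
    have hball_pos : 0 < volume (ball x 1) := measure_ball_pos volume x one_pos
    have hgood : (ball x 1 ∩
        {x' : EuclideanSpace ℝ (Fin N) |
          Integrable (fun z => J (x' - z) * ‖z‖ ^ (-a))}).Nonempty := by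
      by_contra hemp
      rw [Set.not_nonempty_iff_eq_empty] at hemp
      have hsub : ball x 1 ⊆ {x' : EuclideanSpace ℝ (Fin N) |
          ¬ Integrable (fun z => J (x' - z) * ‖z‖ ^ (-a))} := by
        intro y hy
        intro hgood
        exact absurd (Set.mem_inter hy hgood) (by rw [hemp]; exact Set.notMem_empty y)
      have := measure_mono_null hsub (ae_iff.mp hae)
      exact hball_pos.ne' this
    obtain ⟨x', hx'ball, hx'good⟩ := hgood
    have hx'dist : ‖x' - x‖ < 1 := by
      simpa [mem_ball, dist_eq_norm] using hx'ball
    have hbase' : (0:ℝ) < 1 + ‖x'‖ := by positivity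
    -- change of variables identity
    have hchg : ∀ y : EuclideanSpace ℝ (Fin N),
        (∫ z, J (y - z) * hfn z) = ∫ u, J u * hfn (y - u) := by
      intro y
      rw [← integral_sub_left_eq_self (fun u => J u * hfn (y - u)) volume y]
      congr 1
      ext z
      rw [sub_sub_cancel]
    have u1 : (∫ z, J (x - z) * f z) ≤ c₂ * ∫ z, J (x - z) * hfn z := by
      have hint2 : Integrable (fun z => J (x - z) * (c₂ * hfn z)) := by
        refine (((F2 x).const_mul c₂).congr (ae_of_all _ fun z => ?_))
        ring
      calc (∫ z, J (x - z) * f z) ≤ ∫ z, J (x - z) * (c₂ * hfn z) := by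
            refine integral_mono (F1 x) hint2 fun z => ?_
            exact mul_le_mul_of_nonneg_left (hfub z) (hJpos _).le
        _ = ∫ z, c₂ * (J (x - z) * hfn z) := by congr 1; ext z; ring
        _ = c₂ * ∫ z, J (x - z) * hfn z := integral_const_mul _ _
    have u2 : (∫ z, J (x - z) * hfn z) ≤ 2 ^ a * ∫ z, J (x' - z) * hfn z := by
      rw [hchg x, hchg x']
      have hint1 : Integrable (fun u => J u * hfn (x - u)) := by
        refine integrable_mul_bdd hJint
          ((hfn_cont.comp (continuous_const.sub continuous_id)).aestronglyMeasurable)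
          (c := 1) fun u => ?_
        rw [Real.norm_eq_abs, abs_of_pos (hfn_pos _)]
        exact hfn_le_one _
      have hint2 : Integrable (fun u => J u * (2 ^ a * hfn (x' - u))) := by
        refine integrable_mul_bdd hJint
          ((continuous_const.mul
            (hfn_cont.comp (continuous_const.sub continuous_id))).aestronglyMeasurable)
          (c := 2 ^ a) fun u => ?_
        rw [Real.norm_eq_abs, abs_of_pos (by positivity)]
        calc (2:ℝ) ^ a * hfn (x' - u) ≤ 2 ^ a * 1 :=
              mul_le_mul_of_nonneg_left (hfn_le_one _) h2a.le
          _ = 2 ^ a := mul_one _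
      calc (∫ u, J u * hfn (x - u)) ≤ ∫ u, J u * (2 ^ a * hfn (x' - u)) := by
            refine integral_mono hint1 hint2 fun u => ?_
            refine mul_le_mul_of_nonneg_left ?_ (hJpos _).le
            have hdd : ‖x' - u‖ ≤ ‖x' - x‖ + ‖x - u‖ := by
              simpa using norm_sub_le_norm_sub_add_norm_sub x' x u
            exact rpow_two_bound ha.le (by positivity) (by positivity)
              (by linarith [norm_nonneg (x - u)])
        _ = ∫ u, 2 ^ a * (J u * hfn (x' - u)) := by congr 1; ext u; ring
        _ = 2 ^ a * ∫ u, J u * hfn (x' - u) := integral_const_mul _ _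
    have u3 : (∫ z, J (x' - z) * hfn z) ≤ ∫ z, J (x' - z) * ‖z‖ ^ (-a) := by
      have hne : ∀ᵐ z : EuclideanSpace ℝ (Fin N), z ≠ 0 := by
        have hzero : {z : EuclideanSpace ℝ (Fin N) | ¬ z ≠ 0} = {0} := by
          ext z; simp
        rw [ae_iff, hzero]
        exact measure_singleton 0
      refine integral_mono_ae (F2 x') hx'good ?_
      filter_upwards [hne] with z hz
      refine mul_le_mul_of_nonneg_left ?_ (hJpos _).le
      exact Real.rpow_le_rpow_of_nonpos (norm_pos_iff.mpr hz) (by linarith [norm_nonneg z])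
        (by linarith)
    have u4 : (∫ z, J (x' - z) * ‖z‖ ^ (-a)) ≤ Ca * (1 + ‖x'‖) ^ (-a) := hCa x'
    have u5 : Ca * (1 + ‖x'‖) ^ (-a) ≤ C' * (2 ^ a * (1 + ‖x‖) ^ (-a)) := by
      calc Ca * (1 + ‖x'‖) ^ (-a) ≤ C' * (1 + ‖x'‖) ^ (-a) :=
            mul_le_mul_of_nonneg_right (le_max_left _ _) (rpow_nonneg hbase'.le _)
        _ ≤ C' * (2 ^ a * (1 + ‖x‖) ^ (-a)) := by
            refine mul_le_mul_of_nonneg_left ?_ hC'0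
            have hdd : ‖x‖ ≤ ‖x'‖ + ‖x - x'‖ := norm_le_insert' _ _
            have hxx : ‖x - x'‖ < 1 := by rwa [norm_sub_rev]
            exact rpow_two_bound ha.le hbase hbase' (by linarith [norm_nonneg x'])
    calc (∫ z, J (x - z) * f z) ≤ c₂ * ∫ z, J (x - z) * hfn z := u1
      _ ≤ c₂ * (2 ^ a * ∫ z, J (x' - z) * hfn z) :=
          mul_le_mul_of_nonneg_left u2 hc₂.le
      _ ≤ c₂ * (2 ^ a * (C' * (2 ^ a * (1 + ‖x‖) ^ (-a)))) :=
          mul_le_mul_of_nonneg_left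
            (mul_le_mul_of_nonneg_left (le_trans u3 (le_trans u4 u5)) h2a.le) hc₂.le
      _ = Cpre * (1 + ‖x‖) ^ (-a) := by rw [hCpre]; ring
      _ ≤ (max Cpre c₀ + 1) * (1 + ‖x‖) ^ (-a) := by
          refine mul_le_mul_of_nonneg_right ?_ hpow_pos.le
          have := le_max_left Cpre c₀; linarith
end

section
/- Let 0 < θ < κ < N. Then there exist constants C > c > 0 (depending on N, θ, κ) such that for all x ∈ ℝ^N, c (1+|x|)^{θ−κ} ≤ ∫_{ℝ^N} |x−y|^{θ−N} (1+|y|)^{−κ} dy ≤ C (1+|x|)^{θ−κ}. -/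
open MeasureTheory Real Set Metric Module

section aux
variable {E : Type*} [NormedAddCommGroup E] [NormedSpace ℝ E] [MeasurableSpace E]
  [BorelSpace E] [Nontrivial E] [FiniteDimensional ℝ E]
  (μ : Measure E) [μ.IsAddHaarMeasure]

lemma radial_integrable {f : ℝ → ℝ}
    (hf : IntegrableOn (fun y => y ^ (finrank ℝ E - 1) * f y) (Ioi (0:ℝ)) volume) :
    Integrable (fun x : E => f ‖x‖) μ := by
  have h1 : Integrable (fun r : Ioi (0:ℝ) => f r.1) (Measure.volumeIoiPow (finrank ℝ E - 1)) := by
    rw [Measure.volumeIoiPow]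
    rw [integrable_withDensity_iff (by fun_prop) (Filter.Eventually.of_forall fun r => ENNReal.ofReal_lt_top)]
    have : Integrable ((fun y : ℝ => y ^ (finrank ℝ E - 1) * f y) ∘ (Subtype.val : Ioi (0:ℝ) → ℝ))
        (Measure.comap Subtype.val volume) := by
      rw [← MeasurableEmbedding.integrable_map_iff
        (MeasurableEmbedding.subtype_coe measurableSet_Ioi) (μ := Measure.comap Subtype.val volume),
        map_comap_subtype_coe measurableSet_Ioi]
      exact hf
    apply this.congr
    filter_upwards with r
    rw [ENNReal.toReal_ofReal (pow_nonneg r.2.out.le _)]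
    simp only [Function.comp_apply]
    ring
  have h2 : Integrable (fun p : sphere (0:E) 1 × Ioi (0:ℝ) => f p.2.1)
      (μ.toSphere.prod (Measure.volumeIoiPow (finrank ℝ E - 1))) := by
    have := (integrable_const (1:ℝ) (μ := μ.toSphere)).smul_prod h1
    simpa using this
  have h3 : Integrable (fun x : ({(0:E)}ᶜ : Set E) => f ‖x.1‖) (Measure.comap Subtype.val μ) := by
    have := (μ.measurePreserving_homeomorphUnitSphereProd.integrable_comp_emb
      (Homeomorph.measurableEmbedding _)).2 h2
    simpa only [Function.comp_def, homeomorphUnitSphereProd_apply_snd_coe] using this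
  have h4 : Integrable (fun x : E => f ‖x‖) (μ.restrict ({(0:E)}ᶜ)) := by
    rw [← map_comap_subtype_coe (measurableSet_singleton (0:E)).compl,
      MeasurableEmbedding.integrable_map_iff (MeasurableEmbedding.subtype_coe
        (measurableSet_singleton (0:E)).compl)]
    exact h3
  rwa [restrict_compl_singleton] at h4

variable {s R : ℝ}

lemma indicator_ball_eq (hs : s ≠ 0) (z : E) :
    (Ioo (0:ℝ) R).indicator (fun r => r ^ s) ‖z‖
      = (ball (0:E) R).indicator (fun z : E => ‖z‖ ^ s) z := by
  by_cases hz : z ∈ ball (0:E) R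
  · rw [indicator_of_mem hz]
    rcases eq_or_ne ‖z‖ 0 with h0 | h0
    · rw [h0, indicator_of_notMem (by simp), zero_rpow hs]
    · rw [indicator_of_mem]
      exact ⟨lt_of_le_of_ne (norm_nonneg z) (Ne.symm h0), mem_ball_zero_iff.1 hz⟩
  · rw [indicator_of_notMem hz, indicator_of_notMem]
    intro h
    exact hz (mem_ball_zero_iff.2 h.2)

lemma oneDim_ball_eq :
    (fun y : ℝ => y ^ (finrank ℝ E - 1) * (Ioo (0:ℝ) R).indicator (fun r => r ^ s) y)
      = (Ioo (0:ℝ) R).indicator (fun y => y ^ (finrank ℝ E - 1) * y ^ s) := by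
  funext y
  by_cases hy : y ∈ Ioo (0:ℝ) R
  · rw [indicator_of_mem hy, indicator_of_mem hy]
  · rw [indicator_of_notMem hy, indicator_of_notMem hy, mul_zero]

lemma pow_mul_rpow_eq (hE : 1 ≤ finrank ℝ E) {y : ℝ} (hy : 0 < y) :
    y ^ (finrank ℝ E - 1) * y ^ s = y ^ (((finrank ℝ E : ℝ) - 1) + s) := by
  rw [rpow_add hy, ← rpow_natCast y (finrank ℝ E - 1), Nat.cast_sub hE, Nat.cast_one]

lemma integrableOn_oneDim_ball (hE : 1 ≤ finrank ℝ E) (hs : -(finrank ℝ E : ℝ) < s) (hR : 0 < R) :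
    IntegrableOn (fun y : ℝ => y ^ (finrank ℝ E - 1)
      * (Ioo (0:ℝ) R).indicator (fun r => r ^ s) y) (Ioi (0:ℝ)) volume := by
  rw [oneDim_ball_eq]
  apply Integrable.integrableOn
  rw [integrable_indicator_iff measurableSet_Ioo]
  apply IntegrableOn.congr_fun (f := fun y : ℝ => y ^ (((finrank ℝ E : ℝ) - 1) + s))
  · exact (intervalIntegral.integrableOn_Ioo_rpow_iff hR).2 (by push_cast; linarith)
  · intro y hy
    exact (pow_mul_rpow_eq hE hy.1).symm
  · exact measurableSet_Ioo

lemma integrableOn_rpow_ball (hs : -(finrank ℝ E : ℝ) < s) (hs0 : s ≠ 0) (hR : 0 < R) :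
    IntegrableOn (fun z : E => ‖z‖ ^ s) (ball (0:E) R) μ := by
  have hE : 1 ≤ finrank ℝ E := Module.finrank_pos
  have := radial_integrable μ (f := (Ioo (0:ℝ) R).indicator (fun r => r ^ s))
    (integrableOn_oneDim_ball hE hs hR)
  rw [← integrable_indicator_iff measurableSet_ball]
  apply this.congr
  filter_upwards with z
  exact indicator_ball_eq hs0 z

lemma integral_rpow_ball (hs : -(finrank ℝ E : ℝ) < s) (hs0 : s ≠ 0) (hR : 0 < R) :
    ∫ z in ball (0:E) R, ‖z‖ ^ s ∂μ
      = (finrank ℝ E : ℝ) * (μ (ball (0:E) 1)).toReal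
        * (R ^ ((finrank ℝ E : ℝ) + s) / ((finrank ℝ E : ℝ) + s)) := by
  have hE : 1 ≤ finrank ℝ E := Module.finrank_pos
  have key := integral_fun_norm_addHaar μ ((Ioo (0:ℝ) R).indicator (fun r => r ^ s))
  have lhs : ∫ x : E, (Ioo (0:ℝ) R).indicator (fun r => r ^ s) ‖x‖ ∂μ
      = ∫ z in ball (0:E) R, ‖z‖ ^ s ∂μ := by
    rw [← integral_indicator measurableSet_ball]
    exact integral_congr_ae (Filter.Eventually.of_forall fun z => indicator_ball_eq hs0 z)
  have rhs : ∫ y in Ioi (0:ℝ), y ^ (finrank ℝ E - 1) • (Ioo (0:ℝ) R).indicator (fun r => r ^ s) y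
      = R ^ ((finrank ℝ E : ℝ) + s) / ((finrank ℝ E : ℝ) + s) := by
    simp only [smul_eq_mul]
    rw [show (fun y : ℝ => y ^ (finrank ℝ E - 1) * (Ioo (0:ℝ) R).indicator (fun r => r ^ s) y)
      = (Ioo (0:ℝ) R).indicator (fun y => y ^ (finrank ℝ E - 1) * y ^ s) from oneDim_ball_eq]
    rw [setIntegral_indicator measurableSet_Ioo,
      inter_eq_self_of_subset_right Ioo_subset_Ioi_self]
    rw [setIntegral_congr_fun measurableSet_Ioo
      (fun y hy => pow_mul_rpow_eq hE hy.1)]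
    rw [← integral_Ioc_eq_integral_Ioo, ← intervalIntegral.integral_of_le hR.le,
      integral_rpow (Or.inl (by push_cast; linarith))]
    rw [zero_rpow (by push_cast; linarith), sub_zero]
    norm_num
    ring_nf
  rw [lhs, rhs] at key
  rw [key, nsmul_eq_mul, smul_eq_mul, measureReal_def]
  ring

lemma indicator_compl_eq (hR : 0 < R) (z : E) :
    (Ici R).indicator (fun r => r ^ s) ‖z‖
      = ((ball (0:E) R)ᶜ).indicator (fun z : E => ‖z‖ ^ s) z := by
  by_cases hz : z ∈ (ball (0:E) R)ᶜ
  · rw [indicator_of_mem hz, indicator_of_mem]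
    exact not_lt.1 (fun h => hz (mem_ball_zero_iff.2 h))
  · rw [indicator_of_notMem hz, indicator_of_notMem]
    simp only [mem_compl_iff, not_not] at hz
    exact not_le.2 (mem_ball_zero_iff.1 hz)

lemma oneDim_compl_eq :
    (fun y : ℝ => y ^ (finrank ℝ E - 1) * (Ici R).indicator (fun r => r ^ s) y)
      = (Ici R).indicator (fun y => y ^ (finrank ℝ E - 1) * y ^ s) := by
  funext y
  by_cases hy : y ∈ Ici R
  · rw [indicator_of_mem hy, indicator_of_mem hy]
  · rw [indicator_of_notMem hy, indicator_of_notMem hy, mul_zero]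

lemma integrableOn_oneDim_compl (hE : 1 ≤ finrank ℝ E) (hs : s < -(finrank ℝ E : ℝ)) (hR : 0 < R) :
    IntegrableOn (fun y : ℝ => y ^ (finrank ℝ E - 1)
      * (Ici R).indicator (fun r => r ^ s) y) (Ioi (0:ℝ)) volume := by
  rw [oneDim_compl_eq]
  apply Integrable.integrableOn
  rw [integrable_indicator_iff measurableSet_Ici]
  apply IntegrableOn.congr_fun (f := fun y : ℝ => y ^ (((finrank ℝ E : ℝ) - 1) + s))
  · rw [integrableOn_Ici_iff_integrableOn_Ioi]
    exact integrableOn_Ioi_rpow_of_lt (by push_cast; linarith) hR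
  · intro y hy
    exact (pow_mul_rpow_eq hE (lt_of_lt_of_le hR hy)).symm
  · exact measurableSet_Ici

lemma integrableOn_rpow_compl (hs : s < -(finrank ℝ E : ℝ)) (hR : 0 < R) :
    IntegrableOn (fun z : E => ‖z‖ ^ s) ((ball (0:E) R)ᶜ) μ := by
  have hE : 1 ≤ finrank ℝ E := Module.finrank_pos
  have := radial_integrable μ (f := (Ici R).indicator (fun r => r ^ s))
    (integrableOn_oneDim_compl hE hs hR)
  rw [← integrable_indicator_iff measurableSet_ball.compl]
  apply this.congr
  filter_upwards with z
  exact indicator_compl_eq hR z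

lemma integral_rpow_compl (hs : s < -(finrank ℝ E : ℝ)) (hR : 0 < R) :
    ∫ z in (ball (0:E) R)ᶜ, ‖z‖ ^ s ∂μ
      = (finrank ℝ E : ℝ) * (μ (ball (0:E) 1)).toReal
        * (R ^ ((finrank ℝ E : ℝ) + s) / (-((finrank ℝ E : ℝ) + s))) := by
  have hE : 1 ≤ finrank ℝ E := Module.finrank_pos
  have key := integral_fun_norm_addHaar μ ((Ici R).indicator (fun r => r ^ s))
  have lhs : ∫ x : E, (Ici R).indicator (fun r => r ^ s) ‖x‖ ∂μ
      = ∫ z in (ball (0:E) R)ᶜ, ‖z‖ ^ s ∂μ := by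
    rw [← integral_indicator measurableSet_ball.compl]
    exact integral_congr_ae (Filter.Eventually.of_forall fun z => indicator_compl_eq hR z)
  have rhs : ∫ y in Ioi (0:ℝ), y ^ (finrank ℝ E - 1) • (Ici R).indicator (fun r => r ^ s) y
      = R ^ ((finrank ℝ E : ℝ) + s) / (-((finrank ℝ E : ℝ) + s)) := by
    simp only [smul_eq_mul]
    rw [show (fun y : ℝ => y ^ (finrank ℝ E - 1) * (Ici R).indicator (fun r => r ^ s) y)
      = (Ici R).indicator (fun y => y ^ (finrank ℝ E - 1) * y ^ s) from oneDim_compl_eq]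
    rw [setIntegral_indicator measurableSet_Ici,
      inter_eq_self_of_subset_right (Ici_subset_Ioi.2 hR)]
    rw [setIntegral_congr_fun measurableSet_Ici
      (fun y hy => pow_mul_rpow_eq hE (lt_of_lt_of_le hR hy))]
    rw [← setIntegral_congr_set Ioi_ae_eq_Ici,
      integral_Ioi_rpow_of_lt (by push_cast; linarith) hR]
    rw [show ((finrank ℝ E : ℝ) - 1 + s) + 1 = (finrank ℝ E : ℝ) + s by ring]
    rw [neg_div, div_neg]
  rw [lhs, rhs] at key
  rw [key, nsmul_eq_mul, smul_eq_mul, measureReal_def]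
  ring
lemma preimage_sub_ball (x : E) (R : ℝ) :
    (fun y : E => x - y) ⁻¹' (ball (0:E) R) = ball x R := by
  ext y
  simp only [mem_preimage, mem_ball, dist_eq_norm]
  rw [sub_zero, norm_sub_rev]

lemma integrableOn_sub_ball {g : E → ℝ} {R : ℝ} (x : E)
    (h : IntegrableOn g (ball (0:E) R) μ) :
    IntegrableOn (fun y : E => g (x - y)) (ball x R) μ := by
  rw [← preimage_sub_ball x R]
  exact ((Measure.measurePreserving_sub_left μ x).integrableOn_comp_preimage
    (Homeomorph.subLeft x).measurableEmbedding).2 h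

lemma integral_sub_ball (g : E → ℝ) {R : ℝ} (x : E) :
    ∫ y in ball x R, g (x - y) ∂μ = ∫ z in ball (0:E) R, g z ∂μ := by
  rw [← preimage_sub_ball x R]
  exact (Measure.measurePreserving_sub_left μ x).setIntegral_preimage_emb
    (Homeomorph.subLeft x).measurableEmbedding g _

lemma half_rpow {a : ℝ} (ha : 0 ≤ a) (p : ℝ) :
    (a/2) ^ p = 2 ^ (-p) * a ^ p := by
  rw [show a/2 = 2⁻¹ * a by ring, mul_rpow (by norm_num) ha,
    inv_rpow (by norm_num), ← rpow_neg (by norm_num)]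

lemma two_mul_rpow {a : ℝ} (ha : 0 ≤ a) (p : ℝ) :
    (2*a) ^ p = 2 ^ p * a ^ p := mul_rpow (by norm_num) ha
end aux

set_option maxHeartbeats 2000000 in
theorem stmt_5 (N : ℕ) (hN : 1 ≤ N) (θ κ : ℝ) (hθ : 0 < θ) (hθκ : θ < κ) (hκ : κ < N) :
    ∃ c C : ℝ, 0 < c ∧ c < C ∧ ∀ x : EuclideanSpace ℝ (Fin N),
      c * (1 + ‖x‖) ^ (θ - κ) ≤
        (∫ y : EuclideanSpace ℝ (Fin N), ‖x - y‖ ^ (θ - N) * (1 + ‖y‖) ^ (-κ)) ∧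
      (∫ y : EuclideanSpace ℝ (Fin N), ‖x - y‖ ^ (θ - N) * (1 + ‖y‖) ^ (-κ))
        ≤ C * (1 + ‖x‖) ^ (θ - κ) := by
  haveI : Nontrivial (EuclideanSpace ℝ (Fin N)) := by
    apply nontrivial_of_finrank_pos (R := ℝ)
    rw [finrank_euclideanSpace_fin]
    exact hN
  have hfr : finrank ℝ (EuclideanSpace ℝ (Fin N)) = N := finrank_euclideanSpace_fin
  have hN1 : (1:ℝ) ≤ N := by exact_mod_cast hN
  have hNpos : (0:ℝ) < N := by linarith
  have hθN : θ < N := by linarith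
  have hκ0 : 0 < κ := by linarith
  set V : ℝ := (volume (ball (0:EuclideanSpace ℝ (Fin N)) 1)).toReal with hVdef
  have hVpos : 0 < V := ENNReal.toReal_pos (measure_ball_pos volume 0 one_pos).ne'
    measure_ball_lt_top.ne
  -- specialized radial lemmas
  have hs1 : -(N:ℝ) < θ - N := by linarith
  have hs1' : θ - (N:ℝ) ≠ 0 := by intro h; linarith [(sub_eq_zero.1 h)]
  have hs1neg : θ - (N:ℝ) ≤ 0 := by linarith
  have hs2 : -(N:ℝ) < -κ := by linarith
  have hs2' : -κ ≠ 0 := by intro h; simp at h; linarith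
  have hs3 : θ - (N:ℝ) - κ < -(N:ℝ) := by linarith
  have ballInt : ∀ {s : ℝ}, -(N:ℝ) < s → s ≠ 0 → ∀ {R : ℝ}, 0 < R →
      IntegrableOn (fun z : EuclideanSpace ℝ (Fin N) => ‖z‖ ^ s) (ball 0 R) volume := by
    intro s hs hs0 R hR
    exact integrableOn_rpow_ball volume (by rw [hfr]; exact hs) hs0 hR
  have ballVal : ∀ {s : ℝ}, -(N:ℝ) < s → s ≠ 0 → ∀ {R : ℝ}, 0 < R →
      ∫ z in ball (0:EuclideanSpace ℝ (Fin N)) R, ‖z‖ ^ s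
        = (N:ℝ) * V * (R ^ ((N:ℝ) + s) / ((N:ℝ) + s)) := by
    intro s hs hs0 R hR
    have := integral_rpow_ball volume (s := s) (R := R) (by rw [hfr]; exact hs) hs0 hR
    rwa [hfr] at this
  have complInt : ∀ {s : ℝ}, s < -(N:ℝ) → ∀ {R : ℝ}, 0 < R →
      IntegrableOn (fun z : EuclideanSpace ℝ (Fin N) => ‖z‖ ^ s) ((ball 0 R)ᶜ) volume := by
    intro s hs R hR
    exact integrableOn_rpow_compl volume (by rw [hfr]; exact hs) hR
  have complVal : ∀ {s : ℝ}, s < -(N:ℝ) → ∀ {R : ℝ}, 0 < R →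
      ∫ z in (ball (0:EuclideanSpace ℝ (Fin N)) R)ᶜ, ‖z‖ ^ s
        = (N:ℝ) * V * (R ^ ((N:ℝ) + s) / (-((N:ℝ) + s))) := by
    intro s hs R hR
    have := integral_rpow_compl volume (s := s) (R := R) (by rw [hfr]; exact hs) hR
    rwa [hfr] at this
  -- the constants
  set c : ℝ := 2 ^ (-κ) * ((N:ℝ) * V / θ) with hcdef
  set C1 : ℝ := 2 ^ κ * 2 ^ (-θ) * ((N:ℝ) * V / θ) with hC1def
  set C2 : ℝ := 2 ^ ((N:ℝ) - θ) * 2 ^ ((N:ℝ) - κ) * ((N:ℝ) * V / ((N:ℝ) - κ)) with hC2def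
  set C3 : ℝ := 2 ^ ((N:ℝ) - θ) * 2 ^ (θ - κ) * ((N:ℝ) * V / (κ - θ)) with hC3def
  have hcpos : 0 < c :=
    mul_pos (rpow_pos_of_pos two_pos _) (div_pos (mul_pos hNpos hVpos) hθ)
  have hC1pos : 0 < C1 := mul_pos (mul_pos (rpow_pos_of_pos two_pos _)
    (rpow_pos_of_pos two_pos _)) (div_pos (mul_pos hNpos hVpos) hθ)
  have hC2pos : 0 < C2 := mul_pos (mul_pos (rpow_pos_of_pos two_pos _)
    (rpow_pos_of_pos two_pos _)) (div_pos (mul_pos hNpos hVpos) (by linarith))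
  have hC3pos : 0 < C3 := mul_pos (mul_pos (rpow_pos_of_pos two_pos _)
    (rpow_pos_of_pos two_pos _)) (div_pos (mul_pos hNpos hVpos) (by linarith))
  have hcC1 : c < C1 := by
    apply mul_lt_mul_of_pos_right _ (div_pos (mul_pos hNpos hVpos) hθ)
    rw [← rpow_add two_pos]
    exact (rpow_lt_rpow_left_iff one_lt_two).2 (by linarith)
  refine ⟨c, C1 + C2 + C3, hcpos, by linarith, ?_⟩
  intro x
  set R : ℝ := 1 + ‖x‖ with hRdef
  have hR1 : (1:ℝ) ≤ R := le_add_of_nonneg_right (norm_nonneg x)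
  have hRpos : (0:ℝ) < R := lt_of_lt_of_le one_pos hR1
  set f : EuclideanSpace ℝ (Fin N) → ℝ :=
    fun y => ‖x - y‖ ^ (θ - (N:ℝ)) * (1 + ‖y‖) ^ (-κ) with hfdef
  have hfm : Measurable f := by fun_prop
  have hf0 : ∀ y, 0 ≤ f y := fun y => by positivity
  have hf0ae : 0 ≤ᶠ[ae (volume : Measure (EuclideanSpace ℝ (Fin N)))] f :=
    Filter.Eventually.of_forall hf0
  -- weight is at most 1
  have hwle1 : ∀ y : EuclideanSpace ℝ (Fin N), (1 + ‖y‖) ^ (-κ) ≤ 1 := fun y =>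
    rpow_le_one_of_one_le_of_nonpos (by linarith [norm_nonneg y]) (by linarith)
  -- kernel integrable on balls around x
  have hg1int : ∀ {r : ℝ}, 0 < r →
      IntegrableOn (fun y => ‖x - y‖ ^ (θ - (N:ℝ))) (ball x r) volume := by
    intro r hr
    exact integrableOn_sub_ball volume x (ballInt hs1 hs1' hr)
  have hg1val : ∀ {r : ℝ}, 0 < r →
      ∫ y in ball x r, ‖x - y‖ ^ (θ - (N:ℝ)) = (N:ℝ) * V * (r ^ θ / θ) := by
    intro r hr
    rw [integral_sub_ball volume (fun z => ‖z‖ ^ (θ - (N:ℝ))) x, ballVal hs1 hs1' hr,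
      show (N:ℝ) + (θ - N) = θ by ring]
  -- pointwise bound outside the big ball
  have houtside : ∀ y : EuclideanSpace ℝ (Fin N), y ∈ (ball (0:EuclideanSpace ℝ (Fin N)) (2*R))ᶜ →
      f y ≤ 2 ^ ((N:ℝ) - θ) * ‖y‖ ^ (θ - (N:ℝ) - κ) := by
    intro y hy
    have hy2 : 2*R ≤ ‖y‖ := by
      have := mem_ball_zero_iff.not.1 hy
      push_neg at this
      simpa using this
    have hypos : 0 < ‖y‖ := by linarith
    have hxy : ‖y‖/2 ≤ ‖x - y‖ := by
      have h1 : ‖y‖ - ‖x‖ ≤ ‖y - x‖ := norm_sub_norm_le y x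
      have h2 : ‖y - x‖ = ‖x - y‖ := norm_sub_rev y x
      have h3 : ‖x‖ = R - 1 := by rw [hRdef]; ring
      linarith
    have hk : ‖x - y‖ ^ (θ - (N:ℝ)) ≤ (‖y‖/2) ^ (θ - (N:ℝ)) :=
      rpow_le_rpow_of_nonpos (by linarith) hxy hs1neg
    have hw : (1 + ‖y‖) ^ (-κ) ≤ ‖y‖ ^ (-κ) :=
      rpow_le_rpow_of_nonpos hypos (by linarith) (by linarith)
    calc f y ≤ (‖y‖/2) ^ (θ - (N:ℝ)) * ‖y‖ ^ (-κ) := by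
          apply mul_le_mul hk hw (by positivity) (by positivity)
      _ = 2 ^ ((N:ℝ) - θ) * ‖y‖ ^ (θ - (N:ℝ) - κ) := by
          rw [half_rpow (norm_nonneg y), show -(θ - (N:ℝ)) = (N:ℝ) - θ by ring,
            mul_assoc, ← rpow_add hypos, show θ - (N:ℝ) + -κ = θ - (N:ℝ) - κ by ring]
  -- integrability of f
  have hI1 : IntegrableOn f (ball x 1) volume := by
    apply Integrable.mono' (hg1int one_pos) hfm.aestronglyMeasurable.restrict
    filter_upwards with y
    rw [norm_of_nonneg (hf0 y)]
    exact mul_le_of_le_one_right (by positivity) (hwle1 y)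
  have hI2 : IntegrableOn f (closedBall (0:EuclideanSpace ℝ (Fin N)) (2*R) \ ball x 1) volume := by
    apply Integrable.mono' (g := fun _ => (1:ℝ))
      (integrableOn_const ((measure_mono diff_subset).trans_lt measure_closedBall_lt_top).ne)
      hfm.aestronglyMeasurable.restrict
    filter_upwards [ae_restrict_mem (measurableSet_closedBall.diff measurableSet_ball)] with y hy
    rw [norm_of_nonneg (hf0 y)]
    have h1 : (1:ℝ) ≤ ‖x - y‖ := by
      have := hy.2
      rw [mem_ball, dist_eq_norm] at this
      push_neg at this
      calc (1:ℝ) ≤ ‖y - x‖ := this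
        _ = ‖x - y‖ := norm_sub_rev y x
    exact mul_le_one₀ (rpow_le_one_of_one_le_of_nonpos h1 hs1neg) (by positivity) (hwle1 y)
  have hg3 : IntegrableOn (fun y : EuclideanSpace ℝ (Fin N) =>
      2 ^ ((N:ℝ) - θ) * ‖y‖ ^ (θ - (N:ℝ) - κ)) ((ball 0 (2*R))ᶜ) volume :=
    (complInt hs3 (by linarith)).const_mul _
  have hI3 : IntegrableOn f ((ball (0:EuclideanSpace ℝ (Fin N)) (2*R))ᶜ) volume := by
    apply Integrable.mono' hg3 hfm.aestronglyMeasurable.restrict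
    filter_upwards [ae_restrict_mem measurableSet_ball.compl] with y hy
    rw [norm_of_nonneg (hf0 y)]
    exact houtside y hy
  have hIntf : Integrable f (volume : Measure (EuclideanSpace ℝ (Fin N))) := by
    rw [← integrableOn_univ]
    apply IntegrableOn.mono_set (hI1.union (hI2.union hI3))
    intro y _
    by_cases h1 : y ∈ ball x 1
    · exact Or.inl h1
    by_cases h2 : y ∈ closedBall (0:EuclideanSpace ℝ (Fin N)) (2*R)
    · exact Or.inr (Or.inl ⟨h2, h1⟩)
    · exact Or.inr (Or.inr fun hc => h2 (ball_subset_closedBall hc))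
  constructor
  · -- lower bound
    have step1 : ∫ y in ball x R, (2*R) ^ (-κ) * ‖x - y‖ ^ (θ - (N:ℝ))
        ≤ ∫ y in ball x R, f y := by
      apply setIntegral_mono_on (((hg1int hRpos).const_mul _)) (hIntf.integrableOn)
        measurableSet_ball
      intro y hy
      rw [mem_ball, dist_eq_norm] at hy
      have hyx : ‖y‖ ≤ ‖x‖ + ‖y - x‖ := by
        have := norm_sub_norm_le y x
        linarith
      have h2R : 1 + ‖y‖ ≤ 2*R := by
        have h3 : ‖x‖ = R - 1 := by rw [hRdef]; ring
        linarith
      have : (2*R) ^ (-κ) ≤ (1 + ‖y‖) ^ (-κ) :=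
        rpow_le_rpow_of_nonpos (by linarith [norm_nonneg y]) h2R (by linarith)
      calc (2*R) ^ (-κ) * ‖x - y‖ ^ (θ - (N:ℝ))
          ≤ (1 + ‖y‖) ^ (-κ) * ‖x - y‖ ^ (θ - (N:ℝ)) := by
            apply mul_le_mul_of_nonneg_right this (by positivity)
        _ = f y := by rw [hfdef]; ring
    have step2 : ∫ y in ball x R, (2*R) ^ (-κ) * ‖x - y‖ ^ (θ - (N:ℝ))
        = c * R ^ (θ - κ) := by
      rw [integral_const_mul, hg1val hRpos, two_mul_rpow hRpos.le]
      calc 2 ^ (-κ) * R ^ (-κ) * ((N:ℝ) * V * (R ^ θ / θ))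
          = (2 ^ (-κ) * ((N:ℝ) * V / θ)) * (R ^ (-κ) * R ^ θ) := by ring
        _ = c * R ^ (θ - κ) := by
            rw [← rpow_add hRpos, show -κ + θ = θ - κ by ring, hcdef]
    calc c * R ^ (θ - κ) = ∫ y in ball x R, (2*R) ^ (-κ) * ‖x - y‖ ^ (θ - (N:ℝ)) := step2.symm
      _ ≤ ∫ y in ball x R, f y := step1
      _ ≤ ∫ y, f y := setIntegral_le_integral hIntf hf0ae
  · -- upper bound
    have hsplit1 : ∫ y, f y = (∫ y in ball x (R/2), f y) + ∫ y in (ball x (R/2))ᶜ, f y :=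
      (integral_add_compl measurableSet_ball hIntf).symm
    have hsplit2 : ∫ y in (ball x (R/2))ᶜ, f y
        = (∫ y in (ball x (R/2))ᶜ ∩ ball (0:EuclideanSpace ℝ (Fin N)) (2*R), f y)
          + ∫ y in (ball x (R/2))ᶜ ∩ (ball (0:EuclideanSpace ℝ (Fin N)) (2*R))ᶜ, f y := by
      have hdisj : Disjoint ((ball x (R/2))ᶜ ∩ ball (0:EuclideanSpace ℝ (Fin N)) (2*R))
          ((ball x (R/2))ᶜ ∩ (ball (0:EuclideanSpace ℝ (Fin N)) (2*R))ᶜ) :=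
        disjoint_compl_right.mono inter_subset_right inter_subset_right
      rw [← setIntegral_union hdisj
        (measurableSet_ball.compl.inter measurableSet_ball.compl)
        (hIntf.integrableOn) (hIntf.integrableOn), inter_union_compl]
    -- U1
    have hU1 : ∫ y in ball x (R/2), f y ≤ C1 * R ^ (θ - κ) := by
      have hhalf : 0 < R/2 := by linarith
      have mono : ∫ y in ball x (R/2), f y
          ≤ ∫ y in ball x (R/2), (R/2) ^ (-κ) * ‖x - y‖ ^ (θ - (N:ℝ)) := by
        apply setIntegral_mono_on (hIntf.integrableOn) ((hg1int hhalf).const_mul _)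
          measurableSet_ball
        intro y hy
        rw [mem_ball, dist_eq_norm] at hy
        have h3 : ‖x‖ = R - 1 := by rw [hRdef]; ring
        have hyx : ‖x‖ - ‖y - x‖ ≤ ‖y‖ := by
          have := norm_sub_norm_le x y
          have h4 : ‖x - y‖ = ‖y - x‖ := norm_sub_rev x y
          linarith
        have hge : R/2 ≤ 1 + ‖y‖ := by linarith
        have hwb : (1 + ‖y‖) ^ (-κ) ≤ (R/2) ^ (-κ) :=
          rpow_le_rpow_of_nonpos hhalf hge (by linarith)
        calc f y = ‖x - y‖ ^ (θ - (N:ℝ)) * (1 + ‖y‖) ^ (-κ) := rfl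
          _ ≤ ‖x - y‖ ^ (θ - (N:ℝ)) * (R/2) ^ (-κ) := by
              apply mul_le_mul_of_nonneg_left hwb (by positivity)
          _ = (R/2) ^ (-κ) * ‖x - y‖ ^ (θ - (N:ℝ)) := by ring
      have val : ∫ y in ball x (R/2), (R/2) ^ (-κ) * ‖x - y‖ ^ (θ - (N:ℝ))
          = C1 * R ^ (θ - κ) := by
        rw [integral_const_mul, hg1val hhalf, half_rpow hRpos.le, half_rpow hRpos.le, neg_neg]
        calc 2 ^ κ * R ^ (-κ) * ((N:ℝ) * V * (2 ^ (-θ) * R ^ θ / θ))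
            = (2 ^ κ * 2 ^ (-θ) * ((N:ℝ) * V / θ)) * (R ^ (-κ) * R ^ θ) := by ring
          _ = C1 * R ^ (θ - κ) := by
              rw [← rpow_add hRpos, show -κ + θ = θ - κ by ring, hC1def]
      exact mono.trans val.le
    -- U2
    have hU2 : ∫ y in (ball x (R/2))ᶜ ∩ ball (0:EuclideanSpace ℝ (Fin N)) (2*R), f y
        ≤ C2 * R ^ (θ - κ) := by
      have hhalf : 0 < R/2 := by linarith
      have h2Rpos : (0:ℝ) < 2*R := by linarith
      have hwB : IntegrableOn (fun y : EuclideanSpace ℝ (Fin N) => (1 + ‖y‖) ^ (-κ))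
          (ball (0:EuclideanSpace ℝ (Fin N)) (2*R)) volume := by
        apply Integrable.mono' (g := fun _ => (1:ℝ))
          (integrableOn_const measure_ball_lt_top.ne)
          (by fun_prop : Measurable fun y : EuclideanSpace ℝ (Fin N) => (1+‖y‖)^(-κ)).aestronglyMeasurable.restrict
        filter_upwards with y
        rw [norm_of_nonneg (by positivity)]
        exact hwle1 y
      have mono1 : ∫ y in (ball x (R/2))ᶜ ∩ ball (0:EuclideanSpace ℝ (Fin N)) (2*R), f y
          ≤ ∫ y in (ball x (R/2))ᶜ ∩ ball (0:EuclideanSpace ℝ (Fin N)) (2*R),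
              (R/2) ^ (θ - (N:ℝ)) * (1 + ‖y‖) ^ (-κ) := by
        apply setIntegral_mono_on (hIntf.integrableOn)
          ((hwB.mono_set inter_subset_right).const_mul _)
          (measurableSet_ball.compl.inter measurableSet_ball)
        intro y hy
        have h1 : R/2 ≤ ‖x - y‖ := by
          have := hy.1
          rw [mem_compl_iff, mem_ball, dist_eq_norm] at this
          push_neg at this
          calc R/2 ≤ ‖y - x‖ := this
            _ = ‖x - y‖ := norm_sub_rev y x
        have hk : ‖x - y‖ ^ (θ - (N:ℝ)) ≤ (R/2) ^ (θ - (N:ℝ)) :=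
          rpow_le_rpow_of_nonpos hhalf h1 hs1neg
        exact mul_le_mul_of_nonneg_right hk (by positivity)
      have mono2 : ∫ y in (ball x (R/2))ᶜ ∩ ball (0:EuclideanSpace ℝ (Fin N)) (2*R),
              (R/2) ^ (θ - (N:ℝ)) * (1 + ‖y‖) ^ (-κ)
          ≤ (R/2) ^ (θ - (N:ℝ)) * ∫ y in ball (0:EuclideanSpace ℝ (Fin N)) (2*R), ‖y‖ ^ (-κ) := by
        rw [integral_const_mul]
        apply mul_le_mul_of_nonneg_left _ (by positivity)
        have m1 : ∫ y in (ball x (R/2))ᶜ ∩ ball (0:EuclideanSpace ℝ (Fin N)) (2*R), (1 + ‖y‖) ^ (-κ)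
            ≤ ∫ y in ball (0:EuclideanSpace ℝ (Fin N)) (2*R), (1 + ‖y‖) ^ (-κ) := by
          apply setIntegral_mono_set hwB
            (Filter.Eventually.of_forall fun y => by positivity)
            (HasSubset.Subset.eventuallyLE inter_subset_right)
        have m2 : ∫ y in ball (0:EuclideanSpace ℝ (Fin N)) (2*R), (1 + ‖y‖) ^ (-κ)
            ≤ ∫ y in ball (0:EuclideanSpace ℝ (Fin N)) (2*R), ‖y‖ ^ (-κ) := by
          apply setIntegral_mono_ae_restrict hwB (ballInt hs2 hs2' h2Rpos)
          have hzero : (volume : Measure (EuclideanSpace ℝ (Fin N))) {0} = 0 :=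
            measure_singleton 0
          have hae : ∀ᵐ y : EuclideanSpace ℝ (Fin N),
              (1 + ‖y‖) ^ (-κ) ≤ ‖y‖ ^ (-κ) := by
            rw [ae_iff]
            apply measure_mono_null _ hzero
            intro y hy
            simp only [mem_setOf_eq, not_le] at hy
            simp only [mem_singleton_iff]
            by_contra hy0
            have hypos : 0 < ‖y‖ := norm_pos_iff.2 hy0
            have := rpow_le_rpow_of_nonpos hypos (by linarith : ‖y‖ ≤ 1 + ‖y‖) (by linarith : -κ ≤ 0)
            exact absurd this (not_le.2 hy)
          exact ae_restrict_of_ae hae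
        linarith
      have val : (R/2) ^ (θ - (N:ℝ)) * ∫ y in ball (0:EuclideanSpace ℝ (Fin N)) (2*R), ‖y‖ ^ (-κ)
          = C2 * R ^ (θ - κ) := by
        rw [ballVal hs2 hs2' h2Rpos, show (N:ℝ) + -κ = (N:ℝ) - κ by ring,
          half_rpow hRpos.le, two_mul_rpow hRpos.le, show -(θ - (N:ℝ)) = (N:ℝ) - θ by ring]
        calc 2 ^ ((N:ℝ) - θ) * R ^ (θ - (N:ℝ)) * ((N:ℝ) * V * (2 ^ ((N:ℝ) - κ) * R ^ ((N:ℝ) - κ) / ((N:ℝ) - κ)))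
            = (2 ^ ((N:ℝ) - θ) * 2 ^ ((N:ℝ) - κ) * ((N:ℝ) * V / ((N:ℝ) - κ)))
              * (R ^ (θ - (N:ℝ)) * R ^ ((N:ℝ) - κ)) := by ring
          _ = C2 * R ^ (θ - κ) := by
              rw [← rpow_add hRpos, show θ - (N:ℝ) + ((N:ℝ) - κ) = θ - κ by ring, hC2def]
      calc ∫ y in (ball x (R/2))ᶜ ∩ ball (0:EuclideanSpace ℝ (Fin N)) (2*R), f y
          ≤ _ := mono1
        _ ≤ _ := mono2
        _ = C2 * R ^ (θ - κ) := val
    -- U3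
    have hU3 : ∫ y in (ball x (R/2))ᶜ ∩ (ball (0:EuclideanSpace ℝ (Fin N)) (2*R))ᶜ, f y
        ≤ C3 * R ^ (θ - κ) := by
      have h2Rpos : (0:ℝ) < 2*R := by linarith
      have mono1 : ∫ y in (ball x (R/2))ᶜ ∩ (ball (0:EuclideanSpace ℝ (Fin N)) (2*R))ᶜ, f y
          ≤ ∫ y in (ball (0:EuclideanSpace ℝ (Fin N)) (2*R))ᶜ, f y := by
        apply setIntegral_mono_set hI3 (ae_restrict_of_ae hf0ae)
          (HasSubset.Subset.eventuallyLE inter_subset_right)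
      have mono2 : ∫ y in (ball (0:EuclideanSpace ℝ (Fin N)) (2*R))ᶜ, f y
          ≤ ∫ y in (ball (0:EuclideanSpace ℝ (Fin N)) (2*R))ᶜ,
              2 ^ ((N:ℝ) - θ) * ‖y‖ ^ (θ - (N:ℝ) - κ) := by
        apply setIntegral_mono_ae_restrict hI3 hg3
        filter_upwards [ae_restrict_mem measurableSet_ball.compl] with y hy
        exact houtside y hy
      have val : ∫ y in (ball (0:EuclideanSpace ℝ (Fin N)) (2*R))ᶜ,
              2 ^ ((N:ℝ) - θ) * ‖y‖ ^ (θ - (N:ℝ) - κ) = C3 * R ^ (θ - κ) := by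
        rw [integral_const_mul, complVal hs3 h2Rpos,
          show (N:ℝ) + (θ - (N:ℝ) - κ) = θ - κ by ring, show -(θ - κ) = κ - θ by ring,
          two_mul_rpow hRpos.le]
        calc 2 ^ ((N:ℝ) - θ) * ((N:ℝ) * V * (2 ^ (θ - κ) * R ^ (θ - κ) / (κ - θ)))
            = (2 ^ ((N:ℝ) - θ) * 2 ^ (θ - κ) * ((N:ℝ) * V / (κ - θ))) * R ^ (θ - κ) := by ring
          _ = C3 * R ^ (θ - κ) := by rw [hC3def]
      calc ∫ y in (ball x (R/2))ᶜ ∩ (ball (0:EuclideanSpace ℝ (Fin N)) (2*R))ᶜ, f y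
          ≤ _ := mono1
        _ ≤ _ := mono2
        _ = C3 * R ^ (θ - κ) := val
    calc ∫ y, f y = (∫ y in ball x (R/2), f y)
          + ((∫ y in (ball x (R/2))ᶜ ∩ ball (0:EuclideanSpace ℝ (Fin N)) (2*R), f y)
          + ∫ y in (ball x (R/2))ᶜ ∩ (ball (0:EuclideanSpace ℝ (Fin N)) (2*R))ᶜ, f y) := by
          rw [hsplit1, hsplit2]
      _ ≤ C1 * R ^ (θ - κ) + (C2 * R ^ (θ - κ) + C3 * R ^ (θ - κ)) := by
          exact add_le_add hU1 (add_le_add hU2 hU3)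
      _ = (C1 + C2 + C3) * R ^ (θ - κ) := by ring
end

section
/- Let Ω ⊂ ℝ^N be open and bounded, s ≥ 0, μ > 0, K ∈ C(cl Ω) positive, and w₁, w₂ ∈ C²(cl Ω) with w₁, w₂ > 0 in Ω, satisfying −Δw₁ + μw₁ − K(x)w₁^{−s} ≥ 0 ≥ −Δw₂ + μw₂ − K(x)w₂^{−s} in Ω and w₁ ≥ w₂ on ∂Ω. Then w₁ ≥ w₂ throughout cl Ω. -/
open MeasureTheory Real Filter Topology Set

lemma second_deriv_nonneg_of_isLocalMin {g : ℝ → ℝ} {a : ℝ}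
    (hdiff : ∀ᶠ t in 𝓝 (0:ℝ), DifferentiableAt ℝ g t)
    (hmin : IsLocalMin g 0) (hd2 : HasDerivAt (deriv g) a 0) : 0 ≤ a := by
  by_contra hneg
  push_neg at hneg
  have hd0 : deriv g 0 = 0 := hmin.deriv_eq_zero
  have hslope : Tendsto (slope (deriv g) 0) (𝓝[≠] 0) (𝓝 a) :=
    hasDerivAt_iff_tendsto_slope.mp hd2
  have hev : ∀ᶠ t in 𝓝[≠] (0:ℝ), slope (deriv g) 0 t < 0 :=
    hslope.eventually_lt_const hneg
  have hev' : ∀ᶠ t in 𝓝[>] (0:ℝ),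
      DifferentiableAt ℝ g t ∧ g 0 ≤ g t ∧ slope (deriv g) 0 t < 0 := by
    have h1 : ∀ᶠ t in 𝓝[>] (0:ℝ), DifferentiableAt ℝ g t ∧ g 0 ≤ g t :=
      nhdsWithin_le_nhds (hdiff.and hmin)
    have h2 : ∀ᶠ t in 𝓝[>] (0:ℝ), slope (deriv g) 0 t < 0 :=
      nhdsWithin_mono 0 (fun t (ht : t ∈ Ioi 0) => ne_of_gt ht) hev
    filter_upwards [h1, h2] with t h1 h2 using ⟨h1.1, h1.2, h2⟩
  obtain ⟨δ, hδ, hδsub⟩ := mem_nhdsGT_iff_exists_Ioo_subset.mp hev'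
  set c := δ / 2 with hc
  have hδ0 : (0:ℝ) < δ := mem_Ioi.mp hδ
  have hcδ : c ∈ Ioo (0:ℝ) δ := ⟨half_pos hδ0, half_lt_self hδ0⟩
  have hmem : ∀ t ∈ Ioo (0:ℝ) δ, DifferentiableAt ℝ g t ∧ g 0 ≤ g t ∧ deriv g t < 0 := by
    intro t ht
    obtain ⟨h1, h2, h3⟩ := hδsub ht
    refine ⟨h1, h2, ?_⟩
    rw [slope_def_field, hd0, sub_zero, sub_zero, div_neg_iff] at h3
    rcases h3 with ⟨_, ht'⟩ | ⟨h, _⟩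
    · exact absurd ht.1 (not_lt.mpr ht'.le)
    · exact h
  have hcont : ContinuousOn g (Icc 0 c) := by
    intro t ht
    rcases eq_or_lt_of_le ht.1 with rfl | htpos
    · exact (hdiff.self_of_nhds).continuousAt.continuousWithinAt
    · exact ((hmem t ⟨htpos, lt_of_le_of_lt ht.2 hcδ.2⟩).1).continuousAt.continuousWithinAt
  have hanti : StrictAntiOn g (Icc 0 c) := by
    apply strictAntiOn_of_deriv_neg (convex_Icc 0 c) hcont
    intro t ht
    rw [interior_Icc] at ht
    exact (hmem t ⟨ht.1, lt_trans ht.2 hcδ.2⟩).2.2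
  have : g c < g 0 := hanti ⟨le_refl 0, hcδ.1.le⟩ ⟨hcδ.1.le, le_refl c⟩ hcδ.1
  exact absurd (hmem c hcδ).2.1 (not_le.mpr this)

lemma dir2_nonneg {E : Type*} [NormedAddCommGroup E] [NormedSpace ℝ E]
    {u : E → ℝ} {Ω : Set E} (hΩ : IsOpen Ω) {x₀ : E} (hx₀ : x₀ ∈ Ω)
    (hu : ContDiffOn ℝ 2 u Ω) (hmin : IsLocalMin u x₀) (v : E) :
    0 ≤ fderiv ℝ (fun y => fderiv ℝ u y v) x₀ v := by
  have hat : ∀ y ∈ Ω, ContDiffAt ℝ 2 u y := fun y hy => hu.contDiffAt (hΩ.mem_nhds hy)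
  have hdiffΩ : ∀ y ∈ Ω, DifferentiableAt ℝ u y := fun y hy =>
    (hat y hy).differentiableAt (by norm_num)
  set L : ℝ → E := fun t => x₀ + t • v with hLdef
  have hL : ∀ t : ℝ, HasDerivAt L v t := by
    intro t
    simpa [hLdef] using ((hasDerivAt_id t).smul_const v).const_add x₀
  have hL0 : L 0 = x₀ := by simp [hLdef]
  have hLcont : Continuous L := by fun_prop
  have hS : (L ⁻¹' Ω) ∈ 𝓝 (0:ℝ) := by
    have : IsOpen (L ⁻¹' Ω) := hΩ.preimage hLcont
    exact this.mem_nhds (by simp [hL0, hx₀])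
  set g : ℝ → ℝ := fun t => u (L t) with hgdef
  have hg' : ∀ t, L t ∈ Ω → HasDerivAt g (fderiv ℝ u (L t) v) t := fun t ht =>
    ((hdiffΩ _ ht).hasFDerivAt).comp_hasDerivAt t (hL t)
  have hgdiff : ∀ᶠ t in 𝓝 (0:ℝ), DifferentiableAt ℝ g t := by
    filter_upwards [hS] with t ht using (hg' t ht).differentiableAt
  have hgmin : IsLocalMin g 0 := by
    have hmin' : IsLocalMin u (L 0) := by rwa [hL0]
    simpa [hgdef, Function.comp_def] using hmin'.comp_continuous hLcont.continuousAt
  have hF : DifferentiableAt ℝ (fderiv ℝ u) x₀ :=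
    ((hat x₀ hx₀).fderiv_right (m := 1) (by norm_num)).differentiableAt (by norm_num)
  have hG : DifferentiableAt ℝ (fun y => fderiv ℝ u y v) x₀ :=
    hF.clm_apply (differentiableAt_const v)
  have hGL : HasDerivAt (fun t => fderiv ℝ u (L t) v)
      (fderiv ℝ (fun y => fderiv ℝ u y v) x₀ v) 0 := by
    have hG' : HasFDerivAt (fun y => fderiv ℝ u y v)
        (fderiv ℝ (fun y => fderiv ℝ u y v) x₀) (L 0) := by rw [hL0]; exact hG.hasFDerivAt
    exact hG'.comp_hasDerivAt 0 (hL 0)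
  have hEq : (fun t => fderiv ℝ u (L t) v) =ᶠ[𝓝 (0:ℝ)] deriv g := by
    filter_upwards [hS] with t ht using ((hg' t ht).deriv).symm
  have hd2 : HasDerivAt (deriv g) (fderiv ℝ (fun y => fderiv ℝ u y v) x₀ v) 0 :=
    hGL.congr_of_eventuallyEq hEq.symm
  exact second_deriv_nonneg_of_isLocalMin hgdiff hgmin hd2

/-- The Euclidean Laplacian of a function `f : ℝ^N → ℝ`. -/
noncomputable def lap {N : ℕ} (f : EuclideanSpace ℝ (Fin N) → ℝ)
    (x : EuclideanSpace ℝ (Fin N)) : ℝ :=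
  ∑ i : Fin N,
    fderiv ℝ (fun y => fderiv ℝ f y (EuclideanSpace.single i 1)) x (EuclideanSpace.single i 1)

lemma lap_sub_at {N : ℕ} {Ω : Set (EuclideanSpace ℝ (Fin N))} (hΩ : IsOpen Ω)
    {x₀ : EuclideanSpace ℝ (Fin N)} (hx₀ : x₀ ∈ Ω)
    {w₁ w₂ : EuclideanSpace ℝ (Fin N) → ℝ}
    (h1 : ContDiffOn ℝ 2 w₁ Ω) (h2 : ContDiffOn ℝ 2 w₂ Ω) :
    lap (fun y => w₁ y - w₂ y) x₀ = lap w₁ x₀ - lap w₂ x₀ := by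
  have hat1 : ∀ y ∈ Ω, ContDiffAt ℝ 2 w₁ y := fun y hy => h1.contDiffAt (hΩ.mem_nhds hy)
  have hat2 : ∀ y ∈ Ω, ContDiffAt ℝ 2 w₂ y := fun y hy => h2.contDiffAt (hΩ.mem_nhds hy)
  have hd1 : ∀ y ∈ Ω, DifferentiableAt ℝ w₁ y := fun y hy =>
    (hat1 y hy).differentiableAt (by norm_num)
  have hd2 : ∀ y ∈ Ω, DifferentiableAt ℝ w₂ y := fun y hy =>
    (hat2 y hy).differentiableAt (by norm_num)
  unfold lap
  rw [← Finset.sum_sub_distrib]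
  apply Finset.sum_congr rfl
  intro i _
  set v := EuclideanSpace.single i (1:ℝ) with hv
  have hG1 : DifferentiableAt ℝ (fun y => fderiv ℝ w₁ y v) x₀ :=
    (((hat1 x₀ hx₀).fderiv_right (m := 1) (by norm_num)).differentiableAt
      (by norm_num)).clm_apply (differentiableAt_const v)
  have hG2 : DifferentiableAt ℝ (fun y => fderiv ℝ w₂ y v) x₀ :=
    (((hat2 x₀ hx₀).fderiv_right (m := 1) (by norm_num)).differentiableAt
      (by norm_num)).clm_apply (differentiableAt_const v)
  have hev : (fun y => fderiv ℝ (fun z => w₁ z - w₂ z) y v)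
      =ᶠ[𝓝 x₀] (fun y => fderiv ℝ w₁ y v - fderiv ℝ w₂ y v) := by
    filter_upwards [hΩ.mem_nhds hx₀] with y hy
    rw [fderiv_fun_sub (hd1 y hy) (hd2 y hy)]
    simp
  calc fderiv ℝ (fun y => fderiv ℝ (fun z => w₁ z - w₂ z) y v) x₀ v
      = fderiv ℝ (fun y => fderiv ℝ w₁ y v - fderiv ℝ w₂ y v) x₀ v := by
        rw [hev.fderiv_eq]
    _ = fderiv ℝ (fun y => fderiv ℝ w₁ y v) x₀ v
        - fderiv ℝ (fun y => fderiv ℝ w₂ y v) x₀ v := by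
        rw [fderiv_fun_sub hG1 hG2]; simp

theorem stmt_7 (N : ℕ) (hN : 1 ≤ N) (s μ : ℝ) (hs : 0 ≤ s) (hμ : 0 < μ)
    (Ω : Set (EuclideanSpace ℝ (Fin N))) (hΩo : IsOpen Ω) (hΩb : Bornology.IsBounded Ω)
    (K w₁ w₂ : EuclideanSpace ℝ (Fin N) → ℝ)
    (hK : ContinuousOn K (closure Ω)) (hKpos : ∀ x ∈ closure Ω, 0 < K x)
    (hw₁ : ContDiffOn ℝ 2 w₁ (closure Ω)) (hw₂ : ContDiffOn ℝ 2 w₂ (closure Ω))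
    (hw₁pos : ∀ x ∈ Ω, 0 < w₁ x) (hw₂pos : ∀ x ∈ Ω, 0 < w₂ x)
    (hsup : ∀ x ∈ Ω, 0 ≤ -lap w₁ x + μ * w₁ x - K x * w₁ x ^ (-s))
    (hsub : ∀ x ∈ Ω, -lap w₂ x + μ * w₂ x - K x * w₂ x ^ (-s) ≤ 0)
    (hbd : ∀ x ∈ frontier Ω, w₂ x ≤ w₁ x) :
    ∀ x ∈ closure Ω, w₂ x ≤ w₁ x := by
  intro x hx
  by_contra hlt
  push_neg at hlt
  set u : EuclideanSpace ℝ (Fin N) → ℝ := fun y => w₁ y - w₂ y with hudef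
  have huc : ContinuousOn u (closure Ω) := (hw₁.continuousOn).sub (hw₂.continuousOn)
  have hcomp : IsCompact (closure Ω) := hΩb.isCompact_closure
  obtain ⟨x₀, hx₀c, hminOn⟩ := hcomp.exists_isMinOn ⟨x, hx⟩ huc
  have hux₀ : u x₀ < 0 := lt_of_le_of_lt (hminOn hx) (by simp [hudef]; linarith)
  have hx₀Ω : x₀ ∈ Ω := by
    by_contra h
    have hfr : x₀ ∈ frontier Ω := by rw [hΩo.frontier_eq]; exact ⟨hx₀c, h⟩
    have := hbd x₀ hfr
    simp only [hudef] at hux₀; linarith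
  have hnhds : closure Ω ∈ 𝓝 x₀ := mem_of_superset (hΩo.mem_nhds hx₀Ω) subset_closure
  have hlocmin : IsLocalMin u x₀ := hminOn.isLocalMin hnhds
  have huC : ContDiffOn ℝ 2 u Ω := (hw₁.sub hw₂).mono subset_closure
  have hlapnn : 0 ≤ lap u x₀ := by
    unfold lap
    exact Finset.sum_nonneg fun i _ => dir2_nonneg hΩo hx₀Ω huC hlocmin _
  have hlapsub : lap u x₀ = lap w₁ x₀ - lap w₂ x₀ :=
    lap_sub_at hΩo hx₀Ω (hw₁.mono subset_closure) (hw₂.mono subset_closure)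
  have h1 := hsup x₀ hx₀Ω
  have h2 := hsub x₀ hx₀Ω
  have hw12 : w₁ x₀ < w₂ x₀ := by simpa [hudef, sub_neg] using hux₀
  have hpow : w₂ x₀ ^ (-s) ≤ w₁ x₀ ^ (-s) :=
    Real.rpow_le_rpow_of_nonpos (hw₁pos x₀ hx₀Ω) hw12.le (neg_nonpos.mpr hs)
  have hKx : 0 < K x₀ := hKpos x₀ (subset_closure hx₀Ω)
  have hKmul : 0 ≤ K x₀ * (w₁ x₀ ^ (-s) - w₂ x₀ ^ (-s)) :=
    mul_nonneg hKx.le (sub_nonneg.mpr hpow)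
  have huval : u x₀ = w₁ x₀ - w₂ x₀ := rfl
  nlinarith [mul_pos hμ (sub_pos.mpr hw12)]
end

section
/- Let s ≥ 0, μ > 0, K ∈ C(ℝ^N) positive, and w₁, w₂ ∈ C²(ℝ^N) positive functions satisfying −Δw₁ + μw₁ − K(x)w₁^{−s} ≥ 0 ≥ −Δw₂ + μw₂ − K(x)w₂^{−s} in ℝ^N, and liminf_{|x|→∞} (w₁(x) − w₂(x)) ≥ 0. Then w₁ ≥ w₂ in all of ℝ^N. -/
open MeasureTheory Real Filter

/-- 1D second derivative test at a global max. -/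
lemma deriv2_nonpos_of_max (g : ℝ → ℝ) (hg : ContDiff ℝ 2 g)
    (hmax : ∀ t, g t ≤ g 0) : deriv (deriv g) 0 ≤ 0 := by
  by_contra h
  push_neg at h
  have hg2 : ContDiff ℝ ((1:ℕ) + 1) g := by exact_mod_cast hg
  have hder := (contDiff_succ_iff_deriv (n := 1)).mp hg2
  have hder1 : ContDiff ℝ ((0:ℕ) + 1) (deriv g) := by exact_mod_cast hder.2.2
  have hdg := (contDiff_succ_iff_deriv (n := 0)).mp hder1
  have h0 : deriv g 0 = 0 := by
    have : IsLocalMax g 0 := Filter.Eventually.of_forall hmax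
    exact this.deriv_eq_zero
  have hd : HasDerivAt (deriv g) (deriv (deriv g) 0) 0 := (hdg.1 0).hasDerivAt
  have hdw := hd.hasDerivWithinAt (s := Set.Ioi (0:ℝ))
  have hslope : Tendsto (slope (deriv g) 0)
      (nhdsWithin 0 (Set.Ioi 0)) (nhds (deriv (deriv g) 0)) :=
    (hasDerivWithinAt_iff_tendsto_slope.mp hdw).mono_left
      (nhdsWithin_mono _ (fun x hx => ⟨hx, ne_of_gt hx⟩))
  have hev : ∀ᶠ t in nhdsWithin (0:ℝ) (Set.Ioi 0), 0 < slope (deriv g) 0 t :=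
    hslope.eventually (eventually_gt_nhds h)
  have hev' : ∀ᶠ t in nhdsWithin (0:ℝ) (Set.Ioi 0), 0 < deriv g t := by
    filter_upwards [hev, self_mem_nhdsWithin] with t ht ht'
    rw [Set.mem_Ioi] at ht'
    rw [slope_def_field, h0, sub_zero, sub_zero, div_eq_mul_inv] at ht
    have := mul_pos ht ht'
    rw [mul_assoc, inv_mul_cancel₀ (ne_of_gt ht'), mul_one] at this
    exact this
  obtain ⟨δ, hδ, hδsub⟩ := mem_nhdsGT_iff_exists_Ioo_subset.mp hev'
  have hmono : StrictMonoOn g (Set.Icc 0 δ) := by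
    apply strictMonoOn_of_deriv_pos (convex_Icc 0 δ) (hg.continuous.continuousOn)
    intro t ht
    rw [interior_Icc] at ht
    exact hδsub ht
  have hδ0 : (0:ℝ) < δ := by simpa using hδ
  have := hmono (Set.left_mem_Icc.mpr hδ0.le) (Set.right_mem_Icc.mpr hδ0.le) hδ0
  exact absurd (hmax δ) (not_le.mpr this)

lemma second_dir_deriv_nonpos_of_max {E : Type*} [NormedAddCommGroup E] [NormedSpace ℝ E]
    (f : E → ℝ) (hf : ContDiff ℝ 2 f) (x v : E) (hmax : ∀ y, f y ≤ f x) :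
    fderiv ℝ (fun y => fderiv ℝ f y v) x v ≤ 0 := by
  set L : ℝ → E := fun t => x + t • v with hLdef
  have hLc : ContDiff ℝ 2 L := contDiff_const.add (contDiff_id.smul contDiff_const)
  have hLd : ∀ t, HasDerivAt L v t := fun t => by
    simpa [hLdef] using ((hasDerivAt_id t).smul_const v).const_add x
  set g : ℝ → ℝ := fun t => f (L t) with hgdef
  have hg : ContDiff ℝ 2 g := hf.comp hLc
  have hgmax : ∀ t, g t ≤ g 0 := by
    intro t; simp only [hgdef, hLdef]; simpa using hmax (x + t • v)
  have hderiv : deriv g = fun t => fderiv ℝ f (L t) v := by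
    funext t
    exact (((hf.differentiable (by norm_num) (L t)).hasFDerivAt).comp_hasDerivAt t (hLd t)).deriv
  have hfd : Differentiable ℝ (fderiv ℝ f) :=
    (hf.fderiv_right (m := 1) (by norm_num)).differentiable one_ne_zero
  have hh : DifferentiableAt ℝ (fun y => fderiv ℝ f y v) x :=
    ((ContinuousLinearMap.apply ℝ ℝ v).differentiable.comp hfd) x
  have hL0 : L 0 = x := by simp [hLdef]
  have h2 : deriv (deriv g) 0 = fderiv ℝ (fun y => fderiv ℝ f y v) x v := by
    rw [hderiv]
    have hh' : HasFDerivAt (fun y => fderiv ℝ f y v)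
        (fderiv ℝ (fun y => fderiv ℝ f y v) x) (L 0) := by rw [hL0]; exact hh.hasFDerivAt
    exact (hh'.comp_hasDerivAt 0 (hLd 0)).deriv
  rw [← h2]
  exact deriv2_nonpos_of_max g hg hgmax

theorem stmt_8 (N : ℕ) (hN : 1 ≤ N) (s μ : ℝ) (hs : 0 ≤ s) (hμ : 0 < μ)
    (K w₁ w₂ : EuclideanSpace ℝ (Fin N) → ℝ)
    (hK : Continuous K) (hKpos : ∀ x, 0 < K x)
    (hw₁ : ContDiff ℝ 2 w₁) (hw₂ : ContDiff ℝ 2 w₂)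
    (hw₁pos : ∀ x, 0 < w₁ x) (hw₂pos : ∀ x, 0 < w₂ x)
    (hsup : ∀ x, 0 ≤ -lap w₁ x + μ * w₁ x - K x * w₁ x ^ (-s))
    (hsub : ∀ x, -lap w₂ x + μ * w₂ x - K x * w₂ x ^ (-s) ≤ 0)
    (hliminf : ∀ ε : ℝ, 0 < ε →
      ∀ᶠ x in cocompact (EuclideanSpace ℝ (Fin N)), -ε ≤ w₁ x - w₂ x) :
    ∀ x, w₂ x ≤ w₁ x := by
  by_contra hcon
  push_neg at hcon
  obtain ⟨x₀, hx₀⟩ := hcon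
  set φ : EuclideanSpace ℝ (Fin N) → ℝ := fun y => w₂ y - w₁ y with hφdef
  have hφc : ContDiff ℝ 2 φ := hw₂.sub hw₁
  have hφ0 : 0 < φ x₀ := sub_pos.mpr hx₀
  have hε : 0 < φ x₀ / 2 := by linarith
  obtain ⟨t, htc, hts⟩ := mem_cocompact.mp (hliminf (φ x₀ / 2) hε)
  set C : Set (EuclideanSpace ℝ (Fin N)) := t ∪ {x₀} with hCdef
  have hCc : IsCompact C := htc.union isCompact_singleton
  have hCne : C.Nonempty := ⟨x₀, Or.inr rfl⟩
  obtain ⟨z, hzC, hz⟩ := hCc.exists_isMaxOn hCne hφc.continuous.continuousOn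
  have hx₀z : φ x₀ ≤ φ z := hz (Or.inr rfl)
  have hzmax : ∀ y, φ y ≤ φ z := by
    intro y
    by_cases hy : y ∈ t
    · exact hz (Or.inl hy)
    · have hmem : -(φ x₀ / 2) ≤ w₁ y - w₂ y := hts hy
      have h1 : φ y ≤ φ x₀ / 2 := by
        show w₂ y - w₁ y ≤ (w₂ x₀ - w₁ x₀) / 2
        have h0 : -((w₂ x₀ - w₁ x₀) / 2) ≤ w₁ y - w₂ y := hmem
        linarith
      exact h1.trans ((half_le_self hφ0.le).trans hx₀z)
  have hzpos : 0 < φ z := lt_of_lt_of_le hφ0 hx₀z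
  have hwz : w₁ z < w₂ z := sub_pos.mp hzpos
  -- Laplacian comparison at the max point
  have hlap : lap w₂ z - lap w₁ z ≤ 0 := by
    have hterm : ∀ v : EuclideanSpace ℝ (Fin N),
        fderiv ℝ (fun y => fderiv ℝ w₂ y v) z v - fderiv ℝ (fun y => fderiv ℝ w₁ y v) z v
          = fderiv ℝ (fun y => fderiv ℝ φ y v) z v := by
      intro v
      have heq : (fun y => fderiv ℝ φ y v)
          = fun y => fderiv ℝ w₂ y v - fderiv ℝ w₁ y v := by
        funext y
        have : fderiv ℝ φ y = fderiv ℝ w₂ y - fderiv ℝ w₁ y :=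
          fderiv_fun_sub (hw₂.differentiable (by norm_num) y) (hw₁.differentiable (by norm_num) y)
        rw [this]; rfl
      have hd₂ : DifferentiableAt ℝ (fun y => fderiv ℝ w₂ y v) z :=
        ((ContinuousLinearMap.apply ℝ ℝ v).differentiable.comp
          ((hw₂.fderiv_right (m := 1) (by norm_num)).differentiable one_ne_zero)) z
      have hd₁ : DifferentiableAt ℝ (fun y => fderiv ℝ w₁ y v) z :=
        ((ContinuousLinearMap.apply ℝ ℝ v).differentiable.comp
          ((hw₁.fderiv_right (m := 1) (by norm_num)).differentiable one_ne_zero)) z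
      rw [heq, fderiv_fun_sub hd₂ hd₁]
      rfl
    calc lap w₂ z - lap w₁ z
        = ∑ i : Fin N, fderiv ℝ (fun y => fderiv ℝ φ y (EuclideanSpace.single i 1)) z
            (EuclideanSpace.single i 1) := by
          rw [lap, lap, ← Finset.sum_sub_distrib]
          exact Finset.sum_congr rfl fun i _ => hterm _
      _ ≤ 0 := Finset.sum_nonpos fun i _ =>
          second_dir_deriv_nonpos_of_max φ hφc z _ hzmax
  -- rpow comparison
  have hrpow : w₂ z ^ (-s) ≤ w₁ z ^ (-s) :=
    Real.rpow_le_rpow_of_nonpos (hw₁pos z) hwz.le (neg_nonpos.mpr hs)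
  have hKr : K z * w₂ z ^ (-s) ≤ K z * w₁ z ^ (-s) :=
    mul_le_mul_of_nonneg_left hrpow (hKpos z).le
  have hμφ : 0 < μ * (w₂ z - w₁ z) := mul_pos hμ hzpos
  have h1 := hsup z
  have h2 := hsub z
  linarith
end

section
/- Let 0 < θ < N and let u : ℝ^N → (0,∞) be continuous with u(x) ≥ c|x|^{−a} for |x| > 1, where c > 0 and a, m > 0 satisfy am ≤ θ. Then for every x with |x| > 1, the integral ∫_{ℝ^N} |x−y|^{θ−N} u(y)^m dy diverges (equals +∞). -/
open MeasureTheory Real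

theorem stmt_15 (N : ℕ) (hN : 1 ≤ N) (θ a m c : ℝ)
    (hθ0 : 0 < θ) (hθN : θ < N) (ha : 0 < a) (hm : 0 < m) (hc : 0 < c)
    (ham : a * m ≤ θ)
    (u : EuclideanSpace ℝ (Fin N) → ℝ) (hu : Continuous u) (hupos : ∀ x, 0 < u x)
    (hlb : ∀ x : EuclideanSpace ℝ (Fin N), 1 < ‖x‖ → c * ‖x‖ ^ (-a) ≤ u x) :
    ∀ x : EuclideanSpace ℝ (Fin N), 1 < ‖x‖ →
      ∫⁻ y : EuclideanSpace ℝ (Fin N),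
        ENNReal.ofReal (‖x - y‖ ^ (θ - N) * u y ^ m) = ⊤ := by
  intro x hx
  haveI : Nonempty (Fin N) := ⟨⟨0, hN⟩⟩
  haveI : Nontrivial (EuclideanSpace ℝ (Fin N)) := inferInstance
  set R : ℝ := 2 * ‖x‖ with hRdef
  have hR2 : 2 < R := by
    simp only [hRdef]; nlinarith
  have hRpos : 0 < R := by linarith
  set K : ℝ := 2 ^ (θ - N) * c ^ m with hKdef
  have hKpos : 0 < K := by positivity
  set A : ℕ → Set (EuclideanSpace ℝ (Fin N)) :=
    fun k => Metric.ball 0 (2 ^ (k + 1) * R) \ Metric.ball 0 (2 ^ k * R) with hAdef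
  have hAmeas : ∀ k, MeasurableSet (A k) := fun k =>
    measurableSet_ball.diff measurableSet_ball
  -- pointwise lower bound on A k
  have hpt : ∀ k, ∀ y ∈ A k,
      ENNReal.ofReal (K * ((2 ^ (k + 1) * R) ^ N)⁻¹)
        ≤ ENNReal.ofReal (‖x - y‖ ^ (θ - N) * u y ^ m) := by
    intro k y hy
    obtain ⟨hy1, hy2⟩ := hy
    rw [Metric.mem_ball, dist_zero_right] at hy1
    simp only [Metric.mem_ball, dist_zero_right, not_lt] at hy2
    have h2k : (1 : ℝ) ≤ 2 ^ k := one_le_pow₀ one_le_two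
    have hyR : R ≤ ‖y‖ := le_trans (by nlinarith) hy2
    have hy1' : 1 < ‖y‖ := by linarith
    have hxy : ‖x‖ ≤ ‖y‖ := by
      have : ‖x‖ ≤ R := by simp only [hRdef]; nlinarith
      linarith
    have hypos : (0 : ℝ) < ‖y‖ := by linarith
    have hsubpos : 0 < ‖x - y‖ := by
      have h1 : ‖y‖ - ‖x‖ ≤ ‖y - x‖ := norm_sub_norm_le y x
      have h2 : ‖x - y‖ = ‖y - x‖ := norm_sub_rev x y
      have : ‖x‖ < ‖y‖ := by
        have : 2 * ‖x‖ ≤ ‖y‖ := hyR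
        nlinarith
      linarith
    have hub : ‖x - y‖ ≤ 2 * ‖y‖ := le_trans (norm_sub_le x y) (by linarith)
    -- first factor
    have hf1 : 2 ^ (θ - N) * ‖y‖ ^ (θ - N) ≤ ‖x - y‖ ^ (θ - N) := by
      have := Real.rpow_le_rpow_of_nonpos hsubpos hub (by linarith : θ - (N : ℝ) ≤ 0)
      rwa [Real.mul_rpow (by norm_num) hypos.le] at this
    -- second factor
    have hf2 : c ^ m * ‖y‖ ^ (-(a * m)) ≤ u y ^ m := by
      have h1 : c * ‖y‖ ^ (-a) ≤ u y := hlb y hy1'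
      have h2 : (c * ‖y‖ ^ (-a)) ^ m ≤ u y ^ m :=
        Real.rpow_le_rpow (by positivity) h1 hm.le
      calc c ^ m * ‖y‖ ^ (-(a * m)) = (c * ‖y‖ ^ (-a)) ^ m := by
            rw [Real.mul_rpow hc.le (by positivity), ← Real.rpow_mul hypos.le, neg_mul]
        _ ≤ u y ^ m := h2
    have hmain : K * ((2 ^ (k + 1) * R) ^ N)⁻¹ ≤ ‖x - y‖ ^ (θ - N) * u y ^ m := by
      have step1 : K * ((2 ^ (k + 1) * R) ^ N)⁻¹ ≤ K * ‖y‖ ^ (θ - N - a * m) := by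
        have hle1 : ((2 ^ (k + 1) * R) ^ N)⁻¹ ≤ (‖y‖ ^ N)⁻¹ := by
          apply inv_anti₀ (by positivity)
          exact pow_le_pow_left₀ hypos.le hy1.le N
        have hle2 : (‖y‖ ^ N)⁻¹ ≤ ‖y‖ ^ (θ - N - a * m) := by
          have : ‖y‖ ^ (-(N : ℝ)) ≤ ‖y‖ ^ (θ - N - a * m) :=
            Real.rpow_le_rpow_of_exponent_le hy1'.le (by linarith)
          rwa [Real.rpow_neg hypos.le, Real.rpow_natCast] at this
        exact mul_le_mul_of_nonneg_left (le_trans hle1 hle2) hKpos.le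
      have step2 : K * ‖y‖ ^ (θ - N - a * m) ≤ ‖x - y‖ ^ (θ - N) * u y ^ m := by
        have heq : K * ‖y‖ ^ (θ - N - a * m)
            = (2 ^ (θ - N) * ‖y‖ ^ (θ - N)) * (c ^ m * ‖y‖ ^ (-(a * m))) := by
          rw [hKdef]
          rw [show θ - N - a * m = (θ - N) + (-(a * m)) by ring,
            Real.rpow_add hypos]
          ring
        rw [heq]
        apply mul_le_mul hf1 hf2 (by positivity) (by positivity)
      linarith
    exact ENNReal.ofReal_le_ofReal hmain
  -- measure of annuli
  have hfinrank : Module.finrank ℝ (EuclideanSpace ℝ (Fin N)) = N :=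
    finrank_euclideanSpace_fin
  have hvol : ∀ (r : ℝ), 0 ≤ r →
      volume (Metric.ball (0 : EuclideanSpace ℝ (Fin N)) r)
        = ENNReal.ofReal (r ^ N) * volume (Metric.ball (0 : EuclideanSpace ℝ (Fin N)) 1) := by
    intro r hr
    rw [Measure.addHaar_ball _ _ hr, hfinrank]
  set v : ENNReal := volume (Metric.ball (0 : EuclideanSpace ℝ (Fin N)) 1) with hvdef
  have hvpos : 0 < v := Metric.measure_ball_pos _ _ one_pos
  have hvfin : v < ⊤ := measure_ball_lt_top
  have hmeasA : ∀ k, ENNReal.ofReal ((2 ^ k * R) ^ N) * v ≤ volume (A k) := by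
    intro k
    have hsub : Metric.ball (0 : EuclideanSpace ℝ (Fin N)) (2 ^ k * R)
        ⊆ Metric.ball 0 (2 ^ (k + 1) * R) := by
      apply Metric.ball_subset_ball
      have : (2 : ℝ) ^ k ≤ 2 ^ (k + 1) := by
        apply pow_le_pow_right₀ one_le_two; omega
      nlinarith
    have hsmallfin : volume (Metric.ball (0 : EuclideanSpace ℝ (Fin N)) (2 ^ k * R)) ≠ ⊤ :=
      measure_ball_lt_top.ne
    rw [hAdef]
    rw [measure_diff hsub measurableSet_ball.nullMeasurableSet hsmallfin]
    rw [hvol _ (by positivity), hvol _ (by positivity),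
      ← ENNReal.sub_mul (fun _ _ => hvfin.ne)]
    apply mul_le_mul_left
    rw [← ENNReal.ofReal_sub _ (by positivity)]
    apply ENNReal.ofReal_le_ofReal
    have h2N : (2 : ℝ) ≤ 2 ^ N := by
      calc (2 : ℝ) = 2 ^ 1 := (pow_one 2).symm
      _ ≤ 2 ^ N := pow_le_pow_right₀ one_le_two hN
    have : (2 ^ (k + 1) * R) ^ N = 2 ^ N * (2 ^ k * R) ^ N := by
      rw [pow_succ, show (2:ℝ) ^ k * 2 * R = 2 * (2 ^ k * R) by ring, mul_pow]
    rw [this]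
    nlinarith [pow_pos (mul_pos (pow_pos two_pos k) hRpos) N]
  -- the per-annulus constant
  set ε : ENNReal := ENNReal.ofReal (K * (2 ^ N)⁻¹) * v with hεdef
  have hεne : ε ≠ 0 := by
    apply mul_ne_zero
    · simp only [ne_eq, ENNReal.ofReal_eq_zero, not_le]
      positivity
    · exact hvpos.ne'
  have hterm : ∀ k, ε ≤ ∫⁻ y in A k, ENNReal.ofReal (‖x - y‖ ^ (θ - N) * u y ^ m) := by
    intro k
    calc ε ≤ ENNReal.ofReal (K * ((2 ^ (k + 1) * R) ^ N)⁻¹)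
            * (ENNReal.ofReal ((2 ^ k * R) ^ N) * v) := by
          rw [hεdef, ← mul_assoc, ← ENNReal.ofReal_mul (by positivity)]
          apply mul_le_mul_left
          apply ENNReal.ofReal_le_ofReal
          have heq : K * ((2 ^ (k + 1) * R) ^ N)⁻¹ * (2 ^ k * R) ^ N = K * (2 ^ N)⁻¹ := by
            have h1 : (2 ^ (k + 1) * R) ^ N = 2 ^ N * (2 ^ k * R) ^ N := by
              rw [pow_succ, show (2:ℝ) ^ k * 2 * R = 2 * (2 ^ k * R) by ring, mul_pow]
            rw [h1]
            have h2 : ((2 : ℝ) ^ k * R) ^ N ≠ 0 := by positivity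
            field_simp
          rw [heq]
      _ ≤ ENNReal.ofReal (K * ((2 ^ (k + 1) * R) ^ N)⁻¹) * volume (A k) :=
          mul_le_mul_right (hmeasA k) _
      _ = ∫⁻ _ in A k, ENNReal.ofReal (K * ((2 ^ (k + 1) * R) ^ N)⁻¹) :=
          (setLIntegral_const _ _).symm
      _ ≤ ∫⁻ y in A k, ENNReal.ofReal (‖x - y‖ ^ (θ - N) * u y ^ m) :=
          setLIntegral_mono' (hAmeas k) (hpt k)
  -- disjointness
  have hdisj : Pairwise (Function.onFun Disjoint A) := by
    intro i j hij
    wlog h : i < j generalizing i j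
    · exact (this hij.symm (hij.lt_or_gt.resolve_left h)).symm
    refine Set.disjoint_left.2 fun y hyi hyj => ?_
    have h1 : ‖y‖ < 2 ^ (i + 1) * R := by
      have := hyi.1; rwa [Metric.mem_ball, dist_zero_right] at this
    have h2 : 2 ^ j * R ≤ ‖y‖ := by
      have := hyj.2
      simp only [Metric.mem_ball, dist_zero_right, not_lt] at this
      exact this
    have h3 : (2 : ℝ) ^ (i + 1) ≤ 2 ^ j := pow_le_pow_right₀ one_le_two h
    nlinarith
  -- conclusion
  have hchain : (⊤ : ENNReal) ≤ ∫⁻ y, ENNReal.ofReal (‖x - y‖ ^ (θ - N) * u y ^ m) := by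
    calc (⊤ : ENNReal) = ∑' _ : ℕ, ε := (ENNReal.tsum_const_eq_top_of_ne_zero hεne).symm
      _ ≤ ∑' k, ∫⁻ y in A k, ENNReal.ofReal (‖x - y‖ ^ (θ - N) * u y ^ m) :=
          ENNReal.tsum_le_tsum hterm
      _ = ∫⁻ y in ⋃ k, A k, ENNReal.ofReal (‖x - y‖ ^ (θ - N) * u y ^ m) :=
          (lintegral_iUnion hAmeas hdisj _).symm
      _ ≤ ∫⁻ y, ENNReal.ofReal (‖x - y‖ ^ (θ - N) * u y ^ m) :=
          setLIntegral_le_lintegral _ _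
  exact top_le_iff.mp hchain
end
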